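/- arXiv:2412.01489 — 3 statements merged into one kernel-verified Lean document; each statement's English description precedes it below -/
import Mathlib

section
/- Let K = K_V be the complete graph on V with all off-diagonal conductances equal to 1. For every k ≥ 1 and every f : Ξ_k → ℝ in the kernel of the creation operator (that is, Σ_{x∈V} (ξ_x + α_x) f(ξ+δ_x) = 0 for every ξ ∈ Ξ_{k−1}), one has E_{K,α,k}(f) = k·(|α|+k−1)·‖f‖²_{α,k}, where ‖f‖²_{α,k} = Σ_{η∈Ξ_k} μ_{α,k}(η) f(η)². -/
/-!
Detailed balance of `μ_{α,k}` says that reversing a jump, `(η, x, y) ↦ (η - δ_x + δ_y, y, x)`,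
preserves the flux `μ(η) c_{xy} η_x (α_y + η_y)`; for symmetric conductances this turns the
Dirichlet form into `⟨f, -L f⟩_μ`, where `L` is the generator. On the complete graph write
`η = ξ + δ_x`: the jumps out of `x` reach exactly the configurations `ξ + δ_y`, so the `x`-row of
`-L f (η)` is `(|α| + k) f(η) - a† f(ξ) - f(η)`, which is `(|α| + k - 1) f(η)` when `a† f = 0`.
Weighting the rows by `η_x` gives `-L f = k (|α| + k - 1) f`.
-/

open scoped BigOperators Classical

noncomputable section

/-- The configuration space of `k` particles on the finite site set `V`. -/
def Config (V : Type*) [Fintype V] (k : ℕ) : Type _ :=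
  {η : V → ℕ // ∑ x, η x = k}

namespace Config

variable {V : Type*} [Fintype V] [DecidableEq V] {k : ℕ}

lemma apply_le (η : Config V k) (x : V) : η.1 x ≤ k := by
  have h := Finset.single_le_sum (f := η.1) (fun i _ => Nat.zero_le _) (Finset.mem_univ x)
  simpa [η.2] using h

instance instFintype : Fintype (Config V k) :=
  Fintype.ofInjective
    (fun η : Config V k => (fun x => (⟨η.1 x, Nat.lt_succ_of_le (η.apply_le x)⟩ : Fin (k+1))))
    (fun a b hab => Subtype.ext (funext fun x => congrArg Fin.val (congrFun hab x)))

/-- The configuration `η - δ_x + δ_y` (move a particle from `x` to `y`);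
by convention it is `η` itself when `η` has no particle at `x`. -/
def move (η : Config V k) (x y : V) : Config V k :=
  if h : η.1 x = 0 then η else
    ⟨fun z => η.1 z - (if z = x then 1 else 0) + (if z = y then 1 else 0), by
      have hle : ∀ z : V, (if z = x then 1 else 0) ≤ η.1 z := fun z => by
        by_cases hz : z = x
        · simpa [hz] using Nat.one_le_iff_ne_zero.2 h
        · simp [hz]
      have cast_term : ∀ z : V,
          ((η.1 z - (if z = x then 1 else 0) + (if z = y then 1 else 0) : ℕ) : ℤ)
            = (η.1 z : ℤ) - (if z = x then 1 else 0) + (if z = y then 1 else 0) := by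
        intro z
        rw [Nat.cast_add, Nat.cast_sub (hle z)]
        by_cases hz : z = x <;> by_cases hz' : z = y <;> simp [hz, hz']
      have key : ((∑ z, (η.1 z - (if z = x then 1 else 0) + (if z = y then 1 else 0)) : ℕ) : ℤ)
          = (k : ℤ) := by
        rw [Nat.cast_sum]
        rw [Finset.sum_congr rfl (fun z _ => cast_term z)]
        rw [Finset.sum_add_distrib, Finset.sum_sub_distrib]
        have h1 : (∑ z, (η.1 z : ℤ)) = (k : ℤ) := by
          rw [← Nat.cast_sum, η.2]
        rw [h1]
        simp
      exact_mod_cast key⟩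

/-- The configuration `η + δ_x`. -/
def addOne (η : Config V k) (x : V) : Config V (k + 1) :=
  ⟨fun z => η.1 z + (if z = x then 1 else 0), by
    rw [Finset.sum_add_distrib, η.2]
    simp⟩

end Config

section Defs

variable {V : Type*} [Fintype V] [DecidableEq V]

/-- The configuration with `k` particles stacked at `x`. -/
def stackConfig (V : Type*) [Fintype V] [DecidableEq V] (k : ℕ) (x : V) : Config V k :=
  ⟨fun z => if z = x then k else 0, by simp⟩

/-- Normalization constant `Z_{α,k}`. -/
def sipZ (α : V → ℝ) (k : ℕ) : ℝ :=
  Real.Gamma ((∑ x, α x) + k) / (Real.Gamma (∑ x, α x) * (Nat.factorial k))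

/-- The reversible (Dirichlet-multinomial) measure `μ_{α,k}` of SIP. -/
def sipMeasure (α : V → ℝ) {k : ℕ} (η : Config V k) : ℝ :=
  (sipZ α k)⁻¹ * ∏ x, Real.Gamma (α x + η.1 x) / (Real.Gamma (α x) * (Nat.factorial (η.1 x)))

/-- The Dirichlet form of `SIP_k(G, α)`. -/
def dirichletForm (c : V → V → ℝ) (α : V → ℝ) {k : ℕ} (f : Config V k → ℝ) : ℝ :=
  (1 / 2) * ∑ η : Config V k, ∑ x, ∑ y,
    sipMeasure α η * (c x y * η.1 x * (α y + η.1 y) * (f (η.move x y) - f η) ^ 2)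

/-- Mean of `f` under `μ_{α,k}`. -/
def sipMean (α : V → ℝ) {k : ℕ} (f : Config V k → ℝ) : ℝ :=
  ∑ η : Config V k, sipMeasure α η * f η

/-- Variance of `f` under `μ_{α,k}`. -/
def sipVar (α : V → ℝ) {k : ℕ} (f : Config V k → ℝ) : ℝ :=
  ∑ η : Config V k, sipMeasure α η * (f η - sipMean α f) ^ 2

/-- Squared `L²(μ_{α,k})`-norm of `f`. -/
def sipNormSq (α : V → ℝ) {k : ℕ} (f : Config V k → ℝ) : ℝ :=
  ∑ η : Config V k, sipMeasure α η * (f η) ^ 2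

/-- The spectral gap `gap_k(G,α)` of the `k`-particle SIP. -/
def sipGap (c : V → V → ℝ) (α : V → ℝ) (k : ℕ) : ℝ :=
  sInf {r : ℝ | ∃ f : Config V k → ℝ, (∃ η ζ : Config V k, f η ≠ f ζ) ∧
    r = dirichletForm c α f / sipVar α f}

/-- `gap_SIP(G,α) = inf_{k ≥ 2} gap_k(G,α)`. -/
def sipGapInf (c : V → V → ℝ) (α : V → ℝ) : ℝ :=
  sInf {r : ℝ | ∃ k : ℕ, 2 ≤ k ∧ r = sipGap c α k}

/-- The simple graph underlying a symmetric family of conductances. -/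
def graphOf (c : V → V → ℝ) : SimpleGraph V where
  Adj x y := x ≠ y ∧ (0 < c x y ∨ 0 < c y x)
  symm := ⟨fun x y h => ⟨h.1.symm, h.2.symm⟩⟩
  loopless := ⟨fun x h => h.1 rfl⟩

/-- The diameter of the weighted graph: maximal graph distance between two sites. -/
def graphDiam (c : V → V → ℝ) : ℕ :=
  Finset.univ.sup (fun p : V × V => (graphOf c).dist p.1 p.2)

/-- The minimal positive conductance. -/
def cMin (c : V → V → ℝ) : ℝ :=
  sInf {r : ℝ | 0 < r ∧ ∃ x y, c x y = r}

/-- Minimal site weight. -/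
def alphaMin (α : V → ℝ) : ℝ := sInf (Set.range α)

/-- Maximal site weight. -/
def alphaMax (α : V → ℝ) : ℝ := sSup (Set.range α)

/-- Conductances of the complete graph on `V`. -/
def completeCond (V : Type*) [DecidableEq V] : V → V → ℝ :=
  fun x y => if x = y then 0 else 1

/-- The generator matrix of `SIP_k(G,α)` acting on `ℝ^{Ξ_k}` by `mulVec`. -/
def sipMatrix (c : V → V → ℝ) (α : V → ℝ) (k : ℕ) : Matrix (Config V k) (Config V k) ℝ :=
  fun η ζ => ∑ x, ∑ y, c x y * η.1 x * (α y + η.1 y) *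
    ((if η.move x y = ζ then 1 else 0) - (if ζ = η then 1 else 0))

/-- The generator matrix `A_{β,k}` of `k` independent random walks. -/
def rwPartMatrix (c : V → V → ℝ) (β : V → ℝ) (k : ℕ) : Matrix (Config V k) (Config V k) ℝ :=
  fun η ζ => ∑ x, ∑ y, c x y * η.1 x * β y *
    ((if η.move x y = ζ then 1 else 0) - (if ζ = η then 1 else 0))

/-- The generator matrix `B_k` of the pure interaction (fast) dynamics. -/
def clumpMatrix (c : V → V → ℝ) (k : ℕ) : Matrix (Config V k) (Config V k) ℝ :=
  fun η ζ => ∑ x, ∑ y, c x y * η.1 x * η.1 y *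
    ((if η.move x y = ζ then 1 else 0) - (if ζ = η then 1 else 0))

/-- The generator matrix of the purely absorbing (killed) SIP. -/
def killedMatrix (c : V → V → ℝ) (α ω : V → ℝ) (k : ℕ) :
    Matrix (Config V k) (Config V k) ℝ :=
  fun η ζ => sipMatrix c α k η ζ - (if ζ = η then ∑ x, ω x * η.1 x else 0)

/-- `η ∈ Ω_k`: absorbing configurations for the fast dynamics. -/
def inOmega (c : V → V → ℝ) {k : ℕ} (η : Config V k) : Prop :=
  ∀ x y, c x y * η.1 x * η.1 y = 0

/-- The number of occupied sites (stacks) of a configuration. -/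
def numStacks {k : ℕ} (η : Config V k) : ℕ :=
  (Finset.univ.filter fun x => 0 < η.1 x).card

/-- Jump rates of `k` independent random walks: `r^A(η,ζ)`. -/
def rateA (c : V → V → ℝ) (β : V → ℝ) {k : ℕ} (η ζ : Config V k) : ℝ :=
  ∑ x, ∑ y, if η.1 x ≠ 0 ∧ η.move x y = ζ then c x y * η.1 x * β y else 0

/-- Metastable jump rates `r^M(η,ξ) = Σ_ζ r^A(η,ζ) h_ξ(ζ)`, given absorption
probabilities `h`. -/
def rateM (c : V → V → ℝ) (β : V → ℝ) {k : ℕ} (h : Config V k → Config V k → ℝ)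
    (η ξ : Config V k) : ℝ :=
  ∑ ζ, rateA c β η ζ * h ξ ζ

/-- The metastable generator on `Ω_k`, given absorption probabilities `h`. -/
def metaGen (c : V → V → ℝ) (β : V → ℝ) {k : ℕ} (h : Config V k → Config V k → ℝ)
    (g : Config V k → ℝ) (η : Config V k) : ℝ :=
  ∑ ξ, if inOmega c ξ ∧ ξ ≠ η then rateM c β h η ξ * (g ξ - g η) else 0

/-- The (restricted) annihilation operator `â_{k+1} g (η) = Σ_x η_x g(η - δ_x)`. -/
def annihilate {k : ℕ} (g : Config V k → ℝ) (η : Config V (k + 1)) : ℝ :=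
  ∑ x, ∑ ξ : Config V k, if ξ.addOne x = η then (η.1 x : ℝ) * g ξ else 0

/-- The SIP generator as an operator on functions. -/
def sipGen (c : V → V → ℝ) (α : V → ℝ) {k : ℕ} (f : Config V k → ℝ) (η : Config V k) : ℝ :=
  ∑ x, ∑ y, c x y * η.1 x * (α y + η.1 y) * (f (η.move x y) - f η)

/-- The purely absorbing (killed) SIP generator. -/
def killedGen (c : V → V → ℝ) (α ω : V → ℝ) {k : ℕ} (f : Config V k → ℝ)
    (η : Config V k) : ℝ :=
  sipGen c α f η - f η * ∑ x, ω x * η.1 x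

/-- Spectral gap of the killed `k`-particle SIP (Rayleigh quotient infimum). -/
def killedGap (c : V → V → ℝ) (α ω : V → ℝ) (k : ℕ) : ℝ :=
  sInf {r : ℝ | ∃ f : Config V k → ℝ, f ≠ 0 ∧
    r = (∑ η, sipMeasure α η * f η * (-(killedGen c α ω f η))) / sipNormSq α f}

/-- `λ_{k,k}(β)`: the variational bottom eigenvalue of `k` independent walks killed
upon two particles becoming adjacent. -/
def lamLevel (c : V → V → ℝ) (β : V → ℝ) (k : ℕ) : ℝ :=
  sInf {r : ℝ | ∃ f : Config V k → ℝ, f ≠ 0 ∧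
    (∀ η : Config V k, ¬(inOmega c η ∧ numStacks η = k) → f η = 0) ∧
    r = dirichletForm c β f / sipNormSq β f}


/-- The symmetrizing measure `ς_{β,k,m}` on stack configurations. -/
def stackMeasure (β : V → ℝ) {k : ℕ} (η : Config V k) : ℝ :=
  ∏ x, if 0 < η.1 x then β x / η.1 x else 1

/-- The lookdown generator of the SIP with killing, on labeled configurations. -/
def lookdownGen (c : V → V → ℝ) (α ω : V → ℝ) (k : ℕ) (φ : (Fin k → V) → ℝ)
    (v : Fin k → V) : ℝ :=
  (∑ i : Fin k, ∑ x, ∑ y, c x y * (if x = v i then 1 else 0) *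
      (α y + 2 * ∑ j : Fin k, (if (j : ℕ) < (i : ℕ) ∧ v j = y then 1 else 0)) *
      (φ (Function.update v i y) - φ v))
    - φ v * ∑ i, ω (v i)

/-- The unlabeling map `Φ_k` from labeled to unlabeled configurations. -/
def unlabel {k : ℕ} (v : Fin k → V) : Config V k :=
  ⟨fun z => (Finset.univ.filter fun i => v i = z).card, by
    have h := Finset.card_eq_sum_card_fiberwise
      (f := v) (s := Finset.univ) (t := Finset.univ) (fun i _ => Finset.mem_univ _)
    simpa using h.symm⟩

/-- The symmetrization operator `S_k`. -/
def symmetrize (k : ℕ) (φ : (Fin k → V) → ℝ) (v : Fin k → V) : ℝ :=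
  (1 / (Nat.factorial k : ℝ)) * ∑ σ : Equiv.Perm (Fin k), φ (fun i => v (σ i))

/-- `η + δ_x` on the full configuration space `ℕ^V`. -/
def addFn (η : V → ℕ) (x : V) : V → ℕ := fun z => η z + (if z = x then 1 else 0)

/-- `η - δ_x` on the full configuration space (truncated subtraction). -/
def remFn (η : V → ℕ) (x : V) : V → ℕ := fun z => η z - (if z = x then 1 else 0)

/-- `η - δ_x + δ_y` on the full configuration space; `η` itself when `η x = 0`. -/
def moveFn (η : V → ℕ) (x y : V) : V → ℕ :=
  if η x = 0 then η else fun z => η z - (if z = x then 1 else 0) + (if z = y then 1 else 0)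

/-- The generator of the non-conservative (open) SIP. -/
def openGen (c : V → V → ℝ) (α ω θ : V → ℝ) (f : (V → ℕ) → ℝ) (η : V → ℕ) : ℝ :=
  (∑ x, ∑ y, c x y * η x * (α y + η y) * (f (moveFn η x y) - f η))
  + ∑ x, ω x * ((η x : ℝ) * (1 + θ x) * (f (remFn η x) - f η)
      + θ x * (α x + η x) * (f (addFn η x) - f η))

/-- One-site Meixner duality function at density `0`:
`d_{a,0}(m,n) = (n!/(n-m)!) (Γ(a)/Γ(a+m)) 1{m ≤ n}`. -/
def dualD0 (a : ℝ) (m n : ℕ) : ℝ :=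
  if m ≤ n then (Nat.descFactorial n m : ℝ) * (Real.Gamma a / Real.Gamma (a + m)) else 0

/-- One-site Meixner duality function at density `ϱ`. -/
def dualD (a ϱ : ℝ) (m n : ℕ) : ℝ :=
  ∑ l ∈ Finset.range (m + 1), (Nat.choose m l : ℝ) * dualD0 a l n * (-ϱ) ^ (m - l)

/-- The orthogonal duality function `D_{α,ϱ}(ξ,η)`. -/
def dualityFn (α : V → ℝ) (ϱ : ℝ) {k : ℕ} (ξ : Config V k) (η : V → ℕ) : ℝ :=
  ∏ x, dualD (α x) ϱ (ξ.1 x) (η x)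

/-- The polynomial `F_{α,ϱ}^ψ` associated to `ψ : Ξ_k → ℝ`. -/
def liftF (α : V → ℝ) (ϱ : ℝ) {k : ℕ} (ψ : Config V k → ℝ) (η : V → ℕ) : ℝ :=
  ∑ ξ : Config V k, sipMeasure α ξ * ψ ξ * dualityFn α ϱ ξ η

end Defs


end

noncomputable section

namespace Config

variable {V : Type*} [Fintype V] {k : ℕ}

theorem sum_cast (η : Config V k) : ∑ x, (η.1 x : ℝ) = k := by
  rw [← Nat.cast_sum, η.2]

variable [DecidableEq V]

theorem addOne_apply (ξ : Config V k) (x z : V) :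
    (ξ.addOne x).1 z = ξ.1 z + if z = x then 1 else 0 := rfl

theorem move_of_eq_zero {η : Config V k} {x : V} (h : η.1 x = 0) (y : V) : η.move x y = η :=
  dif_pos h

theorem move_apply {η : Config V k} {x : V} (h : η.1 x ≠ 0) (y z : V) :
    (η.move x y).1 z = η.1 z - (if z = x then 1 else 0) + (if z = y then 1 else 0) :=
  congrArg (fun ζ : Config V k => ζ.1 z) (dif_neg h)

theorem move_self (η : Config V k) (x : V) : η.move x x = η := by
  by_cases h : η.1 x = 0
  · exact move_of_eq_zero h x
  · apply Subtype.ext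
    funext z
    rw [move_apply h]
    split_ifs with hz
    · subst hz; omega
    · omega

theorem move_apply_ne_zero {η : Config V k} {x : V} (h : η.1 x ≠ 0) (y : V) :
    (η.move x y).1 y ≠ 0 := by
  rw [move_apply h]
  simp

theorem move_move {η : Config V k} {x : V} (h : η.1 x ≠ 0) (y : V) :
    (η.move x y).move y x = η := by
  apply Subtype.ext
  funext z
  rw [move_apply (move_apply_ne_zero h y), move_apply h]
  split_ifs <;> subst_vars <;> omega

theorem addOne_move (ξ : Config V k) (x y : V) : (ξ.addOne x).move x y = ξ.addOne y := by
  apply Subtype.ext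
  funext z
  rw [move_apply (by simp [addOne_apply])]
  simp only [addOne_apply]
  split_ifs <;> omega

theorem addFn_remFn {η : Config V k} {x : V} (h : η.1 x ≠ 0) :
    addFn (remFn η.1 x) x = η.1 := by
  funext z
  simp only [addFn, remFn]
  split_ifs with hz
  · subst hz; omega
  · rfl

theorem exists_addOne_eq {η : Config V (k + 1)} {x : V} (h : η.1 x ≠ 0) :
    ∃ ξ : Config V k, ξ.addOne x = η := by
  refine ⟨⟨remFn η.1 x, ?_⟩, Subtype.ext (addFn_remFn h)⟩
  have hsum := congrArg (fun n => ∑ z, n z) (addFn_remFn h)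
  simp only [addFn, Finset.sum_add_distrib, η.2, Finset.sum_ite_eq', Finset.mem_univ,
    if_true] at hsum
  omega

end Config

def siteWeight (a : ℝ) (n : ℕ) : ℝ :=
  Real.Gamma (a + n) / (Real.Gamma a * n.factorial)

theorem siteWeight_succ_mul {a : ℝ} {n : ℕ} (h : a + n ≠ 0) :
    siteWeight a (n + 1) * (n + 1) = (a + n) * siteWeight a n := by
  rw [siteWeight, siteWeight, Nat.cast_succ, ← add_assoc, Real.Gamma_add_one h,
    Nat.factorial_succ, Nat.cast_mul, Nat.cast_succ]
  field_simp

section SipMeasure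

variable {V : Type*} [Fintype V]

theorem sipMeasure_eq_prod_siteWeight (α : V → ℝ) {k : ℕ} (η : Config V k) :
    sipMeasure α η = (sipZ α k)⁻¹ * ∏ x, siteWeight (α x) (η.1 x) := rfl

variable [DecidableEq V]

theorem prod_siteWeight_addFn_mul (α : V → ℝ) (m : V → ℕ) {x : V} (h : α x + m x ≠ 0) :
    (∏ z, siteWeight (α z) (addFn m x z)) * (m x + 1)
      = (α x + m x) * ∏ z, siteWeight (α z) (m z) := by
  have hrest : ∏ z ∈ Finset.univ.erase x, siteWeight (α z) (addFn m x z)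
      = ∏ z ∈ Finset.univ.erase x, siteWeight (α z) (m z) :=
    Finset.prod_congr rfl fun z hz => by simp [addFn, Finset.ne_of_mem_erase hz]
  rw [← Finset.mul_prod_erase _ _ (Finset.mem_univ x),
    ← Finset.mul_prod_erase _ (fun z => siteWeight (α z) (m z)) (Finset.mem_univ x), hrest]
  have hx : addFn m x x = m x + 1 := by simp [addFn]
  rw [hx, mul_right_comm, siteWeight_succ_mul (by exact_mod_cast h)]
  ring

def jumpRate (c : V → V → ℝ) (α : V → ℝ) {k : ℕ} (η : Config V k) (x y : V) : ℝ :=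
  c x y * η.1 x * (α y + η.1 y)

theorem sipMeasure_mul_jumpRate_move {c : V → V → ℝ} (hc : ∀ x y, c x y = c y x)
    {α : V → ℝ} (hα : ∀ x, 0 < α x) {k : ℕ} {η : Config V k} {x : V} (h : η.1 x ≠ 0) (y : V) :
    sipMeasure α η * jumpRate c α η x y
      = sipMeasure α (η.move x y) * jumpRate c α (η.move x y) y x := by
  set m := remFn η.1 x
  have hη : η.1 = addFn m x := (Config.addFn_remFn h).symm
  have hη' : (η.move x y).1 = addFn m y := funext (Config.move_apply h y)
  rcases eq_or_ne x y with rfl | hxy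
  · rw [Config.move_self]
  have hpos : ∀ z, α z + m z ≠ 0 := fun z =>
    (add_pos_of_pos_of_nonneg (hα z) (m z).cast_nonneg).ne'
  have hWx := prod_siteWeight_addFn_mul α m (hpos x)
  have hWy := prod_siteWeight_addFn_mul α m (hpos y)
  have hxx : addFn m x x = m x + 1 := by simp [addFn]
  have hyy : addFn m y y = m y + 1 := by simp [addFn]
  have hxy' : addFn m x y = m y := by simp [addFn, hxy.symm]
  have hyx : addFn m y x = m x := by simp [addFn, hxy]
  simp only [sipMeasure_eq_prod_siteWeight, jumpRate, hη, hη', hxx, hyy, hxy', hyx, hc y x]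
  push_cast
  linear_combination (sipZ α k)⁻¹ * c x y * ((α y + m y) * hWx - (α x + m x) * hWy)

def reverseJump {k : ℕ} (p : Config V k × V × V) : Config V k × V × V :=
  if p.1.1 p.2.1 = 0 then p else (p.1.move p.2.1 p.2.2, p.2.2, p.2.1)

theorem reverseJump_involutive {k : ℕ} :
    Function.Involutive (reverseJump (V := V) (k := k)) := by
  rintro ⟨η, x, y⟩
  by_cases h : η.1 x = 0
  · simp [reverseJump, h]
  · simp [reverseJump, h, Config.move_apply_ne_zero h y, Config.move_move h y]

theorem sum_sipMeasure_mul_jumpRate_mul_move {c : V → V → ℝ} (hc : ∀ x y, c x y = c y x)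
    {α : V → ℝ} (hα : ∀ x, 0 < α x) {k : ℕ} (G : Config V k → ℝ) :
    ∑ η, ∑ x, ∑ y, sipMeasure α η * jumpRate c α η x y * G (η.move x y)
      = ∑ η, ∑ x, ∑ y, sipMeasure α η * jumpRate c α η x y * G η := by
  have sum_triple : ∀ F : Config V k → V → V → ℝ,
      ∑ η, ∑ x, ∑ y, F η x y = ∑ p : Config V k × V × V, F p.1 p.2.1 p.2.2 := by
    intro F
    simp only [Fintype.sum_prod_type]
  rw [sum_triple, sum_triple, ← Equiv.sum_comp reverseJump_involutive.toPerm
    fun p => sipMeasure α p.1 * jumpRate c α p.1 p.2.1 p.2.2 * G p.1]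
  refine Finset.sum_congr rfl fun ⟨η, x, y⟩ _ => ?_
  by_cases h : η.1 x = 0
  · simp [reverseJump, h, Config.move_of_eq_zero h]
  · simp only [Function.Involutive.coe_toPerm, reverseJump, h, if_false]
    rw [sipMeasure_mul_jumpRate_move hc hα h y]

theorem dirichletForm_eq_sum_mul_neg_sipGen {c : V → V → ℝ} (hc : ∀ x y, c x y = c y x)
    {α : V → ℝ} (hα : ∀ x, 0 < α x) {k : ℕ} (f : Config V k → ℝ) :
    dirichletForm c α f = ∑ η, sipMeasure α η * f η * -sipGen c α f η := by
  have hrev := sum_sipMeasure_mul_jumpRate_mul_move hc hα fun η => f η ^ 2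
  have expand : dirichletForm c α f
      = (∑ η, ∑ x, ∑ y, sipMeasure α η * jumpRate c α η x y * f (η.move x y) ^ 2
          - ∑ η, ∑ x, ∑ y, sipMeasure α η * jumpRate c α η x y * f η ^ 2) / 2
        + ∑ η, sipMeasure α η * f η * -sipGen c α f η := by
    simp only [dirichletForm, sipGen, ← Finset.sum_sub_distrib, Finset.mul_sum, Finset.sum_div,
      ← Finset.sum_neg_distrib, ← Finset.sum_add_distrib]
    refine Finset.sum_congr rfl fun η _ => Finset.sum_congr rfl fun x _ =>
      Finset.sum_congr rfl fun y _ => ?_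
    simp only [jumpRate]
    ring
  rw [expand, hrev, sub_self, zero_div, zero_add]

end SipMeasure

section CompleteGraph

variable {V : Type*} [DecidableEq V]

theorem completeCond_comm (x y : V) : completeCond V x y = completeCond V y x := by
  simp only [completeCond, eq_comm]

variable [Fintype V]

def creation (α : V → ℝ) {k : ℕ} (f : Config V (k + 1) → ℝ) (ξ : Config V k) : ℝ :=
  ∑ x, ((ξ.1 x : ℝ) + α x) * f (ξ.addOne x)

theorem sum_completeCond_mul (x : V) (g : V → ℝ) :
    ∑ y, completeCond V x y * g y = ∑ y, g y - g x := by
  simp only [completeCond, ite_mul, zero_mul, one_mul, Finset.sum_ite, Finset.sum_const_zero,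
    zero_add, Finset.filter_ne, Finset.sum_erase_eq_sub (Finset.mem_univ x)]

theorem sum_completeCond_mul_sub_of_creation_eq_zero {α : V → ℝ} {k : ℕ}
    {f : Config V (k + 1) → ℝ} {ξ : Config V k} (hξ : creation α f ξ = 0) (x : V) :
    ∑ y, completeCond V x y * (α y + (ξ.addOne x).1 y)
        * (f ((ξ.addOne x).move x y) - f (ξ.addOne x))
      = -((∑ z, α z) + k) * f (ξ.addOne x) := by
  simp only [Config.addOne_move, mul_assoc]
  set η := ξ.addOne x
  have hmass : ∑ y, (α y + η.1 y) = (∑ z, α z) + (k + 1) := by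
    rw [Finset.sum_add_distrib, Config.sum_cast]
    push_cast
    ring
  have hcreate : ∑ y, (α y + η.1 y) * f (ξ.addOne y) = f η := by
    have hsplit : ∀ y, (α y + η.1 y) * f (ξ.addOne y)
        = ((ξ.1 y : ℝ) + α y) * f (ξ.addOne y) + if y = x then f η else 0 := fun y => by
      simp only [η, Config.addOne_apply]
      split_ifs with hy
      · subst hy; push_cast; ring
      · simp [add_comm]
    rw [Finset.sum_congr rfl fun y _ => hsplit y, Finset.sum_add_distrib, Finset.sum_ite_eq']
    simp only [Finset.mem_univ, if_true, add_eq_right]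
    exact hξ
  rw [sum_completeCond_mul x fun y => (α y + η.1 y) * (f (ξ.addOne y) - f η)]
  simp only [η, sub_self, mul_zero, sub_zero, mul_sub, Finset.sum_sub_distrib, ← Finset.sum_mul]
  rw [hcreate, hmass]
  ring

theorem sipGen_completeCond_of_creation_eq_zero {α : V → ℝ} {k : ℕ}
    {f : Config V (k + 1) → ℝ} (hker : ∀ ξ, creation α f ξ = 0) (η : Config V (k + 1)) :
    sipGen (completeCond V) α f η = -((k + 1) * ((∑ z, α z) + k)) * f η := by
  have hrow : ∀ x, ∑ y, completeCond V x y * η.1 x * (α y + η.1 y) * (f (η.move x y) - f η)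
      = η.1 x * (-((∑ z, α z) + k) * f η) := by
    intro x
    by_cases h : η.1 x = 0
    · simp [h]
    obtain ⟨ξ, rfl⟩ := Config.exists_addOne_eq h
    rw [← sum_completeCond_mul_sub_of_creation_eq_zero (hker ξ) x, Finset.mul_sum]
    exact Finset.sum_congr rfl fun y _ => by ring
  rw [sipGen, Finset.sum_congr rfl fun x _ => hrow x, ← Finset.sum_mul, Config.sum_cast]
  push_cast
  ring

end CompleteGraph

end

theorem complete_graph_dirichlet_on_kernel
    {V : Type*} [Fintype V] [DecidableEq V] (α : V → ℝ) (hα : ∀ x, 0 < α x)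
    (k : ℕ) (f : Config V (k + 1) → ℝ)
    (hker : ∀ ξ : Config V k, ∑ x, ((ξ.1 x : ℝ) + α x) * f (ξ.addOne x) = 0) :
    dirichletForm (completeCond V) α f
      = ((k + 1 : ℝ)) * ((∑ x, α x) + (k + 1 : ℝ) - 1) * sipNormSq α f := by
  rw [dirichletForm_eq_sum_mul_neg_sipGen completeCond_comm hα, sipNormSq, Finset.mul_sum]
  refine Finset.sum_congr rfl fun η _ => ?_
  rw [sipGen_completeCond_of_creation_eq_zero hker η]
  ring
end

section
/- Fix a finite connected weighted graph G, positive site weights α̂, and k ≥ 2. For all η ∈ Ω_k, ξ ∈ Ω_k, ζ ∈ Ξ_k the absorption probability h_ξ(ζ) := lim_{t→∞} (e^{t B_k} 1_ξ)(ζ) exists, and the metastable jump rates r^M(η,ξ) := Σ_{ζ∈Ξ_k} r^A(η,ζ) h_ξ(ζ) (for ξ ≠ η) satisfy: (i) for all m, m' ≥ 1 with Ω_{k,m} ≠ ∅ ≠ Ω_{k,m'}, m' > m, and all η ∈ Ω_{k,m}, ξ ∈ Ω_{k,m'}, one has r^M(η,ξ) = 0; (ii) for every m ≥ 2 and every η ∈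 Ω_{k,m}, there exist ℓ ≥ 0, configurations η¹,…,η^ℓ ∈ Ω_{k,m}, some m' < m, and ξ ∈ Ω_{k,m'} such that r^M(η,η¹)·(∏_{h=1}^{ℓ−1} r^M(η^h,η^{h+1}))·r^M(η^ℓ,ξ) > 0 (where for ℓ = 0 the product is simply r^M(η,ξ)). -/
open scoped BigOperators Classical

open scoped Nat
noncomputable section
namespace MetaAux
variable {ι : Type*} [Fintype ι] [DecidableEq ι]

/-- entry of matrix exponential as a `HasSum`. -/
lemma expEntry_hasSum (A : Matrix ι ι ℝ) (i j : ι) :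
    HasSum (fun n : ℕ => (n !⁻¹ : ℝ) * ((A ^ n) i j)) (NormedSpace.exp A i j) := by
  letI : SeminormedRing (Matrix ι ι ℝ) := Matrix.linftyOpSemiNormedRing
  letI : NormedRing (Matrix ι ι ℝ) := Matrix.linftyOpNormedRing
  letI : NormedAlgebra ℝ (Matrix ι ι ℝ) := Matrix.linftyOpNormedAlgebra
  have h := NormedSpace.exp_series_hasSum_exp' (𝕂 := ℝ) A
  have hc : Continuous fun M : Matrix ι ι ℝ => M i j :=
    (continuous_apply j).comp (continuous_apply i)
  have h2 := h.map (AddMonoidHom.mk' (fun M : Matrix ι ι ℝ => M i j)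
    (fun a b => rfl)) hc
  exact h2

lemma pow_entry_nonneg {A : Matrix ι ι ℝ} (hA : ∀ i j, 0 ≤ A i j) (n : ℕ) :
    ∀ i j, 0 ≤ (A ^ n) i j := by
  induction n with
  | zero => intro i j; rw [pow_zero]; by_cases h : i = j <;> simp [Matrix.one_apply, h]
  | succ n ih =>
      intro i j
      rw [pow_succ, Matrix.mul_apply]
      exact Finset.sum_nonneg fun a _ => mul_nonneg (ih i a) (hA a j)

lemma exp_entry_nonneg_of_nonneg {A : Matrix ι ι ℝ} (hA : ∀ i j, 0 ≤ A i j) (i j : ι) :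
    0 ≤ NormedSpace.exp A i j :=
  (expEntry_hasSum A i j).nonneg fun n =>
    mul_nonneg (by positivity) (pow_entry_nonneg hA n i j)

lemma le_exp_entry_of_nonneg {A : Matrix ι ι ℝ} (hA : ∀ i j, 0 ≤ A i j) (n : ℕ) (i j : ι) :
    (n !⁻¹ : ℝ) * ((A ^ n) i j) ≤ NormedSpace.exp A i j :=
  le_hasSum (expEntry_hasSum A i j) n fun m _ =>
    mul_nonneg (by positivity) (pow_entry_nonneg hA m i j)

lemma exp_smul_one (r : ℝ) :
    NormedSpace.exp (r • (1 : Matrix ι ι ℝ)) = Real.exp r • (1 : Matrix ι ι ℝ) := by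
  ext i j
  have h1 := expEntry_hasSum (r • (1 : Matrix ι ι ℝ)) i j
  have hpow : ∀ n : ℕ, ((r • (1 : Matrix ι ι ℝ)) ^ n) i j = r ^ n * (1 : Matrix ι ι ℝ) i j := by
    intro n; rw [smul_pow, one_pow, Matrix.smul_apply, smul_eq_mul]
  by_cases hij : i = j
  · subst hij
    have h2 : HasSum (fun n : ℕ => (n !⁻¹ : ℝ) * r ^ n) (Real.exp r) := by
      have := NormedSpace.exp_series_hasSum_exp' (𝕂 := ℝ) (𝔸 := ℝ) r
      simpa [Real.exp_eq_exp_ℝ, smul_eq_mul] using this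
    have hfun : (fun n : ℕ => (n !⁻¹ : ℝ) * (((r • (1 : Matrix ι ι ℝ)) ^ n) i i))
        = fun n : ℕ => (n !⁻¹ : ℝ) * r ^ n := by
      funext n; rw [hpow, Matrix.one_apply_eq, mul_one]
    rw [hfun] at h1
    rw [h1.unique h2, Matrix.smul_apply, Matrix.one_apply_eq, smul_eq_mul, mul_one]
  · have hfun : (fun n : ℕ => (n !⁻¹ : ℝ) * (((r • (1 : Matrix ι ι ℝ)) ^ n) i j))
        = fun _ : ℕ => (0 : ℝ) := by
      funext n; rw [hpow, Matrix.one_apply_ne hij, mul_zero, mul_zero]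
    rw [hfun] at h1
    rw [h1.unique hasSum_zero, Matrix.smul_apply, Matrix.one_apply_ne hij, smul_zero]

/-- Shift identity: `exp B = e^{-λ} • exp (B + λ•1)`. -/
lemma exp_eq_shift (B : Matrix ι ι ℝ) (lam : ℝ) :
    NormedSpace.exp B = Real.exp (-lam) • NormedSpace.exp (B + lam • 1) := by
  have hB : B = (B + lam • (1 : Matrix ι ι ℝ)) + (-lam) • 1 := by
    rw [add_assoc, ← add_smul]; simp
  have hcomm : Commute (B + lam • (1 : Matrix ι ι ℝ)) ((-lam) • (1 : Matrix ι ι ℝ)) :=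
    (Commute.one_right _).smul_right _
  conv_lhs => rw [hB]
  rw [Matrix.exp_add_of_commute _ _ hcomm, exp_smul_one, mul_smul_comm, mul_one]

lemma row_sum_exp_eq_one {A : Matrix ι ι ℝ} (hrow : ∀ i, ∑ j, A i j = 0) (i : ι) :
    ∑ j, NormedSpace.exp A i j = 1 := by
  have hpow : ∀ n : ℕ, 1 ≤ n → ∑ j, (A ^ n) i j = 0 := by
    intro n hn
    obtain ⟨m, rfl⟩ := Nat.exists_eq_add_of_le hn
    have hmm : 1 + m = m + 1 := Nat.add_comm 1 m
    rw [hmm, pow_succ]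
    simp only [Matrix.mul_apply]
    rw [Finset.sum_comm]
    simp only [← Finset.mul_sum]
    simp [hrow]
  have h1 : HasSum (fun n : ℕ => ∑ j, (n !⁻¹ : ℝ) * ((A ^ n) i j))
      (∑ j, NormedSpace.exp A i j) :=
    hasSum_sum fun j _ => expEntry_hasSum A i j
  have h2 : HasSum (fun n : ℕ => if n = 0 then (1 : ℝ) else 0) 1 := hasSum_ite_eq 0 1
  have hfun : (fun n : ℕ => ∑ j, (n !⁻¹ : ℝ) * ((A ^ n) i j))
      = fun n : ℕ => if n = 0 then (1 : ℝ) else 0 := by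
    funext n
    rcases Nat.eq_zero_or_pos n with hn | hn
    · subst hn; simp [Matrix.one_apply]
    · rw [if_neg (Nat.pos_iff_ne_zero.mp hn), ← Finset.mul_sum, hpow n hn, mul_zero]
  rw [hfun] at h1
  exact h1.unique h2

lemma exp_entry_of_zero_row {A : Matrix ι ι ℝ} {i : ι} (hrow : ∀ j, A i j = 0) (j : ι) :
    NormedSpace.exp A i j = (1 : Matrix ι ι ℝ) i j := by
  have hpow : ∀ n : ℕ, 1 ≤ n → (A ^ n) i j = 0 := by
    intro n hn
    obtain ⟨m, rfl⟩ := Nat.exists_eq_add_of_le hn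
    rw [Nat.add_comm 1 m, pow_succ']
    rw [Matrix.mul_apply]
    simp [hrow]
  have h1 := expEntry_hasSum A i j
  have h2 : HasSum (fun n : ℕ => if n = 0 then ((1 : Matrix ι ι ℝ) i j) else 0)
      ((1 : Matrix ι ι ℝ) i j) := hasSum_ite_eq 0 _
  have hfun : (fun n : ℕ => (n !⁻¹ : ℝ) * ((A ^ n) i j))
      = fun n : ℕ => if n = 0 then ((1 : Matrix ι ι ℝ) i j) else 0 := by
    funext n
    rcases Nat.eq_zero_or_pos n with hn | hn
    · subst hn; simp
    · rw [if_neg (Nat.pos_iff_ne_zero.mp hn), hpow n hn, mul_zero]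
  rw [hfun] at h1
  exact h1.unique h2

lemma exp_entry_of_closed {A : Matrix ι ι ℝ} {S : Set ι}
    (hS : ∀ a ∈ S, ∀ b, A a b ≠ 0 → b ∈ S) {i j : ι} (hi : i ∈ S) (hj : j ∉ S) :
    NormedSpace.exp A i j = 0 := by
  have hpow : ∀ n : ℕ, ∀ a ∈ S, (A ^ n) a j = 0 := by
    intro n
    induction n with
    | zero =>
        intro a ha
        rw [pow_zero, Matrix.one_apply_ne]
        rintro rfl; exact hj ha
    | succ n ih =>
        intro a ha
        rw [pow_succ', Matrix.mul_apply]
        refine Finset.sum_eq_zero fun b _ => ?_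
        by_cases hb : A a b = 0
        · rw [hb, zero_mul]
        · rw [ih b (hS a ha b hb), mul_zero]
  have h1 := expEntry_hasSum A i j
  have hfun : (fun n : ℕ => (n !⁻¹ : ℝ) * ((A ^ n) i j)) = fun _ : ℕ => (0 : ℝ) := by
    funext n; rw [hpow n i hi, mul_zero]
  rw [hfun] at h1
  exact h1.unique hasSum_zero

lemma pow_entry_pos_of_chain {A : Matrix ι ι ℝ} (hA : ∀ i j, 0 ≤ A i j)
    {r : ι → ι → Prop} (hr : ∀ a b, r a b → 0 < A a b) {i j : ι}
    (h : Relation.ReflTransGen r i j) :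
    ∃ n : ℕ, 0 < (A ^ n) i j := by
  induction h using Relation.ReflTransGen.head_induction_on with
  | refl => exact ⟨0, by simp [Matrix.one_apply]⟩
  | head hab _ ih =>
      obtain ⟨n, hn⟩ := ih
      rename_i a b _
      refine ⟨n + 1, ?_⟩
      rw [pow_succ', Matrix.mul_apply]
      have hle : A a b * (A ^ n) b j ≤ ∑ x, A a x * (A ^ n) x j :=
        Finset.single_le_sum (f := fun x => A a x * (A ^ n) x j)
          (fun x _ => mul_nonneg (hA a x) (pow_entry_nonneg hA n x j)) (Finset.mem_univ b)
      exact lt_of_lt_of_le (mul_pos (hr a b hab) hn) hle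

/-- Shift constant making all diagonal entries nonnegative. -/
def genShift (B : Matrix ι ι ℝ) : ℝ := ∑ a, |B a a|

lemma genShift_diag (B : Matrix ι ι ℝ) (i : ι) : 0 ≤ B i i + genShift B := by
  have h1 : |B i i| ≤ genShift B :=
    Finset.single_le_sum (f := fun a => |B a a|) (fun a _ => abs_nonneg _) (Finset.mem_univ i)
  have h2 := neg_abs_le (B i i)
  linarith

lemma shiftM_nonneg {B : Matrix ι ι ℝ} (hoff : ∀ i j, i ≠ j → 0 ≤ B i j) :
    ∀ i j, 0 ≤ (B + genShift B • 1) i j := by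
  intro i j
  by_cases h : i = j
  · subst h
    simpa [Matrix.add_apply, Matrix.smul_apply, Matrix.one_apply_eq] using genShift_diag B i
  · simpa [Matrix.add_apply, Matrix.smul_apply, Matrix.one_apply_ne h] using hoff i j h

lemma exp_smul_shift (B : Matrix ι ι ℝ) (t : ℝ) :
    NormedSpace.exp (t • B) = Real.exp (-(t * genShift B)) •
      NormedSpace.exp (t • (B + genShift B • 1)) := by
  have hM : (t • B) + (t * genShift B) • (1 : Matrix ι ι ℝ) = t • (B + genShift B • 1) := by
    rw [smul_add, smul_smul]
  rw [exp_eq_shift (t • B) (t * genShift B), hM]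

lemma exp_smul_entry_nonneg {B : Matrix ι ι ℝ} (hoff : ∀ i j, i ≠ j → 0 ≤ B i j)
    {t : ℝ} (ht : 0 ≤ t) (i j : ι) : 0 ≤ NormedSpace.exp (t • B) i j := by
  rw [exp_smul_shift, Matrix.smul_apply, smul_eq_mul]
  exact mul_nonneg (Real.exp_nonneg _)
    (exp_entry_nonneg_of_nonneg (fun a b => by
      rw [Matrix.smul_apply, smul_eq_mul]
      exact mul_nonneg ht (shiftM_nonneg hoff a b)) i j)

lemma exp_smul_entry_pos {B : Matrix ι ι ℝ} (hoff : ∀ i j, i ≠ j → 0 ≤ B i j)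
    {r : ι → ι → Prop} (hr : ∀ a b, r a b → a ≠ b ∧ 0 < B a b) {i j : ι}
    (h : Relation.ReflTransGen r i j) {t : ℝ} (ht : 0 < t) :
    0 < NormedSpace.exp (t • B) i j := by
  set M := B + genShift B • 1 with hMdef
  have hMnn : ∀ a b, 0 ≤ (t • M) a b := fun a b => by
    rw [Matrix.smul_apply, smul_eq_mul]
    exact mul_nonneg ht.le (shiftM_nonneg hoff a b)
  have hrM : ∀ a b, r a b → 0 < (t • M) a b := by
    intro a b hab
    obtain ⟨hne, hpos⟩ := hr a b hab
    rw [Matrix.smul_apply, smul_eq_mul]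
    refine mul_pos ht ?_
    simpa [hMdef, Matrix.add_apply, Matrix.smul_apply, Matrix.one_apply_ne hne] using hpos
  obtain ⟨n, hn⟩ := pow_entry_pos_of_chain hMnn hrM h
  have hterm : 0 < (n !⁻¹ : ℝ) * (((t • M) ^ n) i j) := by positivity
  have hle := le_exp_entry_of_nonneg hMnn n i j
  rw [exp_smul_shift, Matrix.smul_apply, smul_eq_mul]
  exact mul_pos (Real.exp_pos _) (lt_of_lt_of_le hterm hle)

lemma exp_smul_entry_le_one {B : Matrix ι ι ℝ} (hoff : ∀ i j, i ≠ j → 0 ≤ B i j)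
    (hrow : ∀ i, ∑ j, B i j = 0) {t : ℝ} (ht : 0 ≤ t) (i j : ι) :
    NormedSpace.exp (t • B) i j ≤ 1 := by
  have hsum : ∑ j', NormedSpace.exp (t • B) i j' = 1 :=
    row_sum_exp_eq_one (fun a => by
      simp only [Matrix.smul_apply, smul_eq_mul, ← Finset.mul_sum, hrow a, mul_zero]) i
  calc NormedSpace.exp (t • B) i j
      ≤ ∑ j', NormedSpace.exp (t • B) i j' :=
        Finset.single_le_sum (fun j' _ => exp_smul_entry_nonneg hoff ht i j')
          (Finset.mem_univ j)
    _ = 1 := hsum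

lemma exp_smul_entry_mono {B : Matrix ι ι ℝ} (hoff : ∀ i j, i ≠ j → 0 ≤ B i j)
    {ξ : ι} (habs : ∀ j, B ξ j = 0) {s u : ℝ} (hs : 0 ≤ s) (hsu : s ≤ u) (ζ : ι) :
    NormedSpace.exp (s • B) ζ ξ ≤ NormedSpace.exp (u • B) ζ ξ := by
  have hsplit : u • B = s • B + (u - s) • B := by rw [← add_smul]; ring_nf
  have hcomm : Commute (s • B) ((u - s) • B) := ((Commute.refl B).smul_left s).smul_right _
  rw [hsplit, Matrix.exp_add_of_commute _ _ hcomm, Matrix.mul_apply]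
  have habs' : ∀ j', ((u - s) • B) ξ j' = 0 := fun j' => by
    rw [Matrix.smul_apply, habs j', smul_zero]
  have hdiag : NormedSpace.exp ((u - s) • B) ξ ξ = 1 := by
    rw [exp_entry_of_zero_row habs', Matrix.one_apply_eq]
  have hterm : NormedSpace.exp (s • B) ζ ξ
      = NormedSpace.exp (s • B) ζ ξ * NormedSpace.exp ((u - s) • B) ξ ξ := by
    rw [hdiag, mul_one]
  rw [hterm]
  exact Finset.single_le_sum (f := fun ρ =>
      NormedSpace.exp (s • B) ζ ρ * NormedSpace.exp ((u - s) • B) ρ ξ)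
    (fun ρ _ => mul_nonneg (exp_smul_entry_nonneg hoff hs ζ ρ)
      (exp_smul_entry_nonneg hoff (by linarith) ρ ξ)) (Finset.mem_univ ξ)


end MetaAux
end

noncomputable section
namespace MetaAux
variable {V : Type*} [Fintype V] [DecidableEq V] {k : ℕ}

lemma move_apply (η : Config V k) {x : V} (hx : η.1 x ≠ 0) (y z : V) :
    (η.move x y).1 z = η.1 z - (if z = x then 1 else 0) + (if z = y then 1 else 0) := by
  simp [Config.move, hx]

lemma move_apply_x (η : Config V k) {x y : V} (hx : η.1 x ≠ 0) (hxy : x ≠ y) :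
    (η.move x y).1 x = η.1 x - 1 := by
  rw [move_apply η hx, if_pos rfl, if_neg hxy]; omega

lemma move_apply_y (η : Config V k) {x y : V} (hx : η.1 x ≠ 0) (hxy : x ≠ y) :
    (η.move x y).1 y = η.1 y + 1 := by
  rw [move_apply η hx, if_neg (Ne.symm hxy), if_pos rfl]; omega

lemma move_apply_other (η : Config V k) {x y z : V} (hx : η.1 x ≠ 0) (hzx : z ≠ x)
    (hzy : z ≠ y) : (η.move x y).1 z = η.1 z := by
  rw [move_apply η hx, if_neg hzx, if_neg hzy]; omega

lemma move_ne (η : Config V k) {x y : V} (hx : η.1 x ≠ 0) (hxy : x ≠ y) :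
    η.move x y ≠ η := by
  intro h
  have := congrArg (fun σ : Config V k => σ.1 x) h
  simp only [move_apply_x η hx hxy] at this
  omega

variable (c : V → V → ℝ)

/-- One jump of the fast (clump) dynamics. -/
def stepRel (σ ρ : Config V k) : Prop :=
  ∃ x y, x ≠ y ∧ 0 < c x y ∧ 0 < σ.1 x ∧ 0 < σ.1 y ∧ ρ = σ.move x y

lemma stepRel_ne {σ ρ : Config V k} (h : stepRel c σ ρ) : σ ≠ ρ := by
  obtain ⟨x, y, hxy, _, hx, _, rfl⟩ := h
  exact (move_ne σ hx.ne' hxy).symm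

lemma clump_offdiag_nonneg (hnonneg : ∀ x y, 0 ≤ c x y) (η ρ : Config V k) (hne : η ≠ ρ) :
    0 ≤ clumpMatrix c k η ρ := by
  refine Finset.sum_nonneg fun x _ => Finset.sum_nonneg fun y _ => ?_
  rw [if_neg (Ne.symm hne), sub_zero]
  have h1 : (0:ℝ) ≤ c x y * η.1 x * η.1 y :=
    mul_nonneg (mul_nonneg (hnonneg x y) (Nat.cast_nonneg _)) (Nat.cast_nonneg _)
  have h2 : (0:ℝ) ≤ (if η.move x y = ρ then (1:ℝ) else 0) := by split <;> norm_num
  exact mul_nonneg h1 h2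

lemma clump_row_sum (η : Config V k) : ∑ ζ, clumpMatrix c k η ζ = 0 := by
  unfold clumpMatrix
  rw [Finset.sum_comm]
  refine Finset.sum_eq_zero fun x _ => ?_
  rw [Finset.sum_comm]
  refine Finset.sum_eq_zero fun y _ => ?_
  rw [← Finset.mul_sum, Finset.sum_sub_distrib]
  simp

lemma clump_absorbing {ξ : Config V k} (hΩ : inOmega c ξ) (ρ : Config V k) :
    clumpMatrix c k ξ ρ = 0 := by
  unfold clumpMatrix
  refine Finset.sum_eq_zero fun x _ => Finset.sum_eq_zero fun y _ => ?_
  rw [hΩ x y, zero_mul]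

lemma clump_step_exists (hnonneg : ∀ x y, 0 ≤ c x y) {η ρ : Config V k} (hne : ρ ≠ η)
    (hB : clumpMatrix c k η ρ ≠ 0) :
    ∃ x y, 0 < c x y ∧ 0 < η.1 x ∧ 0 < η.1 y ∧ ρ = η.move x y := by
  obtain ⟨x, -, hx⟩ := Finset.exists_ne_zero_of_sum_ne_zero hB
  obtain ⟨y, -, hy⟩ := Finset.exists_ne_zero_of_sum_ne_zero hx
  rw [if_neg hne] at hy
  have hmv : η.move x y = ρ := by
    by_contra hmv
    rw [if_neg hmv] at hy
    simp at hy
  rw [if_pos hmv] at hy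
  have h1 : c x y * η.1 x * η.1 y ≠ 0 := by
    intro h0; rw [h0] at hy; simp at hy
  have hc : c x y ≠ 0 := fun h0 => h1 (by rw [h0, zero_mul, zero_mul])
  have hx0 : η.1 x ≠ 0 := by
    intro h0; apply h1; rw [h0]; simp
  have hy0 : η.1 y ≠ 0 := by
    intro h0; apply h1; rw [h0]; simp
  exact ⟨x, y, lt_of_le_of_ne (hnonneg x y) (Ne.symm hc), Nat.pos_of_ne_zero hx0,
    Nat.pos_of_ne_zero hy0, hmv.symm⟩

lemma clump_step_pos (hnonneg : ∀ x y, 0 ≤ c x y) {σ ρ : Config V k} (h : stepRel c σ ρ) :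
    0 < clumpMatrix c k σ ρ := by
  obtain ⟨x, y, hxy, hc, hx, hy, rfl⟩ := h
  have hne : σ.move x y ≠ σ := move_ne σ hx.ne' hxy
  unfold clumpMatrix
  refine Finset.sum_pos' (fun a _ => Finset.sum_nonneg fun b _ => ?_) ⟨x, Finset.mem_univ x, ?_⟩
  · rw [if_neg hne, sub_zero]
    have h1 : (0:ℝ) ≤ c a b * σ.1 a * σ.1 b :=
      mul_nonneg (mul_nonneg (hnonneg a b) (Nat.cast_nonneg _)) (Nat.cast_nonneg _)
    have h2 : (0:ℝ) ≤ (if σ.move a b = σ.move x y then (1:ℝ) else 0) := by split <;> norm_num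
    exact mul_nonneg h1 h2
  · refine Finset.sum_pos' (fun b _ => ?_) ⟨y, Finset.mem_univ y, ?_⟩
    · rw [if_neg hne, sub_zero]
      have h1 : (0:ℝ) ≤ c x b * σ.1 x * σ.1 b :=
        mul_nonneg (mul_nonneg (hnonneg x b) (Nat.cast_nonneg _)) (Nat.cast_nonneg _)
      have h2 : (0:ℝ) ≤ (if σ.move x b = σ.move x y then (1:ℝ) else 0) := by split <;> norm_num
      exact mul_nonneg h1 h2
    · rw [if_neg hne, if_pos rfl]
      have hx' : (0:ℝ) < σ.1 x := by exact_mod_cast hx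
      have hy' : (0:ℝ) < σ.1 y := by exact_mod_cast hy
      have : (0:ℝ) < c x y * σ.1 x * σ.1 y := by positivity
      simpa using this

/-- Absorption probabilities for the fast dynamics. -/
def absorbH (ξ ζ : Config V k) : ℝ :=
  ⨆ t : ℝ, NormedSpace.exp ((max t 0) • clumpMatrix c k) ζ ξ

variable {c}

section Props

lemma clump_hoff (hnonneg : ∀ x y, 0 ≤ c x y) : ∀ η ρ : Config V k, η ≠ ρ → 0 ≤ clumpMatrix c k η ρ :=
  clump_offdiag_nonneg c hnonneg

lemma absorbH_bdd (hnonneg : ∀ x y, 0 ≤ c x y) (ξ ζ : Config V k) :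
    BddAbove (Set.range fun t : ℝ =>
      NormedSpace.exp ((max t 0) • clumpMatrix c k) ζ ξ) := by
  refine ⟨1, ?_⟩
  rintro r ⟨t, rfl⟩
  exact exp_smul_entry_le_one (clump_hoff hnonneg) (clump_row_sum c) (le_max_right t 0) ζ ξ

lemma absorbH_nonneg (hnonneg : ∀ x y, 0 ≤ c x y) (ξ ζ : Config V k) : 0 ≤ absorbH c ξ ζ := by
  refine le_trans ?_ (le_ciSup (absorbH_bdd hnonneg ξ ζ) (0 : ℝ))
  exact exp_smul_entry_nonneg (clump_hoff hnonneg) (le_max_right 0 0) ζ ξ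

lemma absorbH_tendsto (hnonneg : ∀ x y, 0 ≤ c x y) {ξ : Config V k} (hΩ : inOmega c ξ) (ζ : Config V k) :
    Filter.Tendsto (fun t : ℝ => NormedSpace.exp (t • clumpMatrix c k) ζ ξ)
      Filter.atTop (nhds (absorbH c ξ ζ)) := by
  have hmono : Monotone fun t : ℝ =>
      NormedSpace.exp ((max t 0) • clumpMatrix c k) ζ ξ := by
    intro a b hab
    exact exp_smul_entry_mono (clump_hoff hnonneg) (clump_absorbing c hΩ)
      (le_max_right a 0) (max_le_max hab le_rfl) ζ
  have h1 := tendsto_atTop_ciSup hmono (absorbH_bdd hnonneg ξ ζ)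
  refine h1.congr' ?_
  filter_upwards [Filter.eventually_ge_atTop (0:ℝ)] with t ht
  rw [max_eq_left ht]

lemma absorbH_eq_zero (hnonneg : ∀ x y, 0 ≤ c x y) {ξ : Config V k} {S : Set (Config V k)}
    (hS : ∀ a ∈ S, ∀ b, clumpMatrix c k a b ≠ 0 → b ∈ S) {ζ : Config V k}
    (hζ : ζ ∈ S) (hξ : ξ ∉ S) : absorbH c ξ ζ = 0 := by
  have hfun : (fun t : ℝ => NormedSpace.exp ((max t 0) • clumpMatrix c k) ζ ξ)
      = fun _ : ℝ => (0:ℝ) := by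
    funext t
    refine exp_entry_of_closed (S := S) ?_ hζ hξ
    intro a ha b hab
    refine hS a ha b fun h0 => hab ?_
    rw [Matrix.smul_apply, h0, smul_zero]
  unfold absorbH
  rw [hfun, ciSup_const]

lemma absorbH_pos (hnonneg : ∀ x y, 0 ≤ c x y) {ξ ζ : Config V k}
    (hreach : Relation.ReflTransGen (stepRel c) ζ ξ) : 0 < absorbH c ξ ζ := by
  have hpos : 0 < NormedSpace.exp ((max (1:ℝ) 0) • clumpMatrix c k) ζ ξ := by
    rw [max_eq_left zero_le_one]
    refine exp_smul_entry_pos (clump_hoff hnonneg)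
      (r := stepRel c) (fun a b hab => ⟨stepRel_ne c hab, clump_step_pos c hnonneg hab⟩)
      hreach one_pos
  exact lt_of_lt_of_le hpos (le_ciSup (absorbH_bdd hnonneg ξ ζ) (1 : ℝ))

end Props

section Rates
variable {β : V → ℝ}

lemma rateA_nonneg (hnonneg : ∀ x y, 0 ≤ c x y) (hβ : ∀ x, 0 < β x) (η ζ : Config V k) : 0 ≤ rateA c β η ζ := by
  refine Finset.sum_nonneg fun x _ => Finset.sum_nonneg fun y _ => ?_
  split
  · exact mul_nonneg (mul_nonneg (hnonneg x y) (Nat.cast_nonneg _)) (hβ y).le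
  · exact le_rfl

lemma rateA_pos (hnonneg : ∀ x y, 0 ≤ c x y) (hβ : ∀ x, 0 < β x) {η : Config V k} {x y : V} (hc : 0 < c x y) (hx : η.1 x ≠ 0) :
    0 < rateA c β η (η.move x y) := by
  refine Finset.sum_pos' (fun a _ => Finset.sum_nonneg fun b _ => ?_)
    ⟨x, Finset.mem_univ x, Finset.sum_pos' (fun b _ => ?_) ⟨y, Finset.mem_univ y, ?_⟩⟩
  · split
    · exact mul_nonneg (mul_nonneg (hnonneg a b) (Nat.cast_nonneg _)) (hβ b).le
    · exact le_rfl
  · split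
    · exact mul_nonneg (mul_nonneg (hnonneg x b) (Nat.cast_nonneg _)) (hβ b).le
    · exact le_rfl
  · rw [if_pos ⟨hx, rfl⟩]
    have hx' : (0:ℝ) < η.1 x := by exact_mod_cast Nat.pos_of_ne_zero hx
    have := hβ y
    positivity

lemma rateA_ne_zero (hnonneg : ∀ x y, 0 ≤ c x y) {η ζ : Config V k} (hA : rateA c β η ζ ≠ 0) :
    ∃ x y, 0 < c x y ∧ η.1 x ≠ 0 ∧ ζ = η.move x y := by
  obtain ⟨x, -, hx⟩ := Finset.exists_ne_zero_of_sum_ne_zero hA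
  obtain ⟨y, -, hy⟩ := Finset.exists_ne_zero_of_sum_ne_zero hx
  by_cases hcond : η.1 x ≠ 0 ∧ η.move x y = ζ
  · rw [if_pos hcond] at hy
    have hc : c x y ≠ 0 := fun h0 => hy (by rw [h0, zero_mul, zero_mul])
    exact ⟨x, y, lt_of_le_of_ne (hnonneg x y) (Ne.symm hc), hcond.1, hcond.2.symm⟩
  · rw [if_neg hcond] at hy
    exact absurd rfl hy

lemma rateM_pos (hnonneg : ∀ x y, 0 ≤ c x y) (hβ : ∀ x, 0 < β x) {η ξ : Config V k} {x y : V} (hc : 0 < c x y) (hx : η.1 x ≠ 0)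
    (hreach : Relation.ReflTransGen (stepRel c) (η.move x y) ξ) :
    0 < rateM c β (absorbH c) η ξ := by
  refine Finset.sum_pos' (fun ζ _ => mul_nonneg (rateA_nonneg hnonneg hβ η ζ)
      (absorbH_nonneg hnonneg ξ ζ)) ⟨η.move x y, Finset.mem_univ _, ?_⟩
  exact mul_pos (rateA_pos hnonneg hβ hc hx) (absorbH_pos hnonneg hreach)

end Rates

/-- The support of a configuration. -/
def suppF (η : Config V k) : Finset V := Finset.univ.filter fun z => 0 < η.1 z

lemma mem_suppF {η : Config V k} {z : V} : z ∈ suppF η ↔ 0 < η.1 z := by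
  simp [suppF]

lemma numStacks_eq (η : Config V k) : numStacks η = (suppF η).card := rfl

lemma inOmega_of_subset {η ρ : Config V k} (hsub : ∀ z, 0 < ρ.1 z → 0 < η.1 z)
    (hΩ : inOmega c η) : inOmega c ρ := by
  intro x y
  rcases Nat.eq_zero_or_pos (ρ.1 x) with hx | hx
  · rw [hx]; push_cast; ring
  rcases Nat.eq_zero_or_pos (ρ.1 y) with hy | hy
  · rw [hy]; push_cast; ring
  have hx' := hsub x hx
  have hy' := hsub y hy
  have h0 := hΩ x y
  have hc : c x y = 0 := by
    have hx'' : (η.1 x : ℝ) ≠ 0 := by exact_mod_cast hx'.ne'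
    have hy'' : (η.1 y : ℝ) ≠ 0 := by exact_mod_cast hy'.ne'
    have := mul_eq_zero.mp h0
    rcases this with h | h
    · rcases mul_eq_zero.mp h with h | h
      · exact h
      · exact absurd h hx''
    · exact absurd h hy''
  rw [hc]; ring

lemma suppF_move {σ : Config V k} {x y : V} (hx : 0 < σ.1 x) (hy : 0 < σ.1 y) (hxy : x ≠ y) :
    suppF (σ.move x y) = if σ.1 x = 1 then (suppF σ).erase x else suppF σ := by
  ext z
  by_cases hzx : z = x
  · subst hzx
    rw [mem_suppF, move_apply_x σ hx.ne' hxy]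
    split
    · rename_i h1; simp [h1]
    · rename_i h1
      simp only [Finset.mem_erase, mem_suppF]
      omega
  · by_cases hzy : z = y
    · subst hzy
      rw [mem_suppF, move_apply_y σ hx.ne' hxy]
      have : z ∈ suppF σ ↔ True := by simp [mem_suppF, hy]
      split
      · simp [Finset.mem_erase, mem_suppF, hzx, hy]
      · simp [mem_suppF, hy]
    · rw [mem_suppF, move_apply_other σ hx.ne' hzx hzy]
      split
      · simp [Finset.mem_erase, mem_suppF, hzx]
      · simp [mem_suppF]

lemma numStacks_move_le {σ : Config V k} {x y : V} (hx : 0 < σ.1 x) (hy : 0 < σ.1 y)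
    (hxy : x ≠ y) : numStacks (σ.move x y) ≤ numStacks σ := by
  rw [numStacks_eq, numStacks_eq, suppF_move hx hy hxy]
  split
  · exact le_trans (Finset.card_erase_le) le_rfl
  · exact le_rfl

lemma numStacks_move_lt {σ : Config V k} {x y : V} (hx : 0 < σ.1 x) (hy : 0 < σ.1 y)
    (hxy : x ≠ y) (h1 : σ.1 x = 1) : numStacks (σ.move x y) = numStacks σ - 1 := by
  rw [numStacks_eq, numStacks_eq, suppF_move hx hy hxy, if_pos h1,
    Finset.card_erase_of_mem (mem_suppF.mpr hx)]

/-- Merge the whole stack at `x` onto `y`. -/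
def mergeCfg (σ : Config V k) (x y : V) (hxy : x ≠ y) : Config V k :=
  ⟨Function.update (Function.update σ.1 x 0) y (σ.1 y + σ.1 x), by
    have h1 : ∑ z, Function.update (Function.update σ.1 x 0) y (σ.1 y + σ.1 x) z
        = (σ.1 y + σ.1 x) + ∑ z ∈ Finset.univ \ {y}, Function.update σ.1 x 0 z :=
      Finset.sum_update_of_mem (Finset.mem_univ y) _ _
    have h2 : ∑ z ∈ Finset.univ \ {y}, Function.update σ.1 x 0 z
        = 0 + ∑ z ∈ (Finset.univ \ {y}) \ {x}, σ.1 z :=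
      Finset.sum_update_of_mem (by simp [hxy]) _ _
    have h3 : σ.1 x + ∑ z ∈ ((Finset.univ \ {y}).erase x), σ.1 z
        = ∑ z ∈ Finset.univ \ {y}, σ.1 z :=
      Finset.add_sum_erase _ _ (by simp [hxy])
    have h4 : σ.1 y + ∑ z ∈ (Finset.univ.erase y), σ.1 z = ∑ z : V, σ.1 z :=
      Finset.add_sum_erase _ _ (Finset.mem_univ y)
    have h5 := σ.2
    rw [h1, h2]
    rw [Finset.erase_eq] at h3 h4
    omega⟩

lemma mergeCfg_spec (σ : Config V k) (x y : V) (hxy : x ≠ y) (z : V) :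
    (mergeCfg σ x y hxy).1 z
      = if z = x then 0 else if z = y then σ.1 y + σ.1 x else σ.1 z := by
  show Function.update (Function.update σ.1 x 0) y (σ.1 y + σ.1 x) z = _
  by_cases hzy : z = y
  · subst hzy
    rw [Function.update_self, if_neg hxy.symm, if_pos rfl]
  · rw [Function.update_of_ne hzy]
    by_cases hzx : z = x
    · subst hzx; rw [Function.update_self, if_pos rfl]
    · rw [Function.update_of_ne hzx, if_neg hzx, if_neg hzy]

lemma reach_dump {x y : V} (hxy : x ≠ y) (hc : 0 < c x y) :
    ∀ n (σ : Config V k), σ.1 x = n → 0 < σ.1 y →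
    ∀ τ : Config V k,
      (∀ z, τ.1 z = if z = x then 0 else if z = y then σ.1 y + σ.1 x else σ.1 z) →
    Relation.ReflTransGen (stepRel c) σ τ := by
  intro n
  induction n with
  | zero =>
      intro σ hσx hσy τ hτ
      have : τ = σ := by
        refine Subtype.ext (funext fun z => ?_)
        rw [hτ z]
        by_cases hzx : z = x
        · subst hzx; rw [if_pos rfl, hσx]
        · rw [if_neg hzx]
          by_cases hzy : z = y
          · subst hzy; rw [if_pos rfl, hσx]; omega
          · rw [if_neg hzy]
      rw [this]
  | succ n ih =>
      intro σ hσx hσy τ hτ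
      have hx : 0 < σ.1 x := by omega
      set σ' := σ.move x y with hσ'
      have hstep : stepRel c σ σ' := ⟨x, y, hxy, hc, hx, hσy, rfl⟩
      have hσ'x : σ'.1 x = n := by rw [hσ', move_apply_x σ hx.ne' hxy, hσx]; omega
      have hσ'y : 0 < σ'.1 y := by rw [hσ', move_apply_y σ hx.ne' hxy]; omega
      refine Relation.ReflTransGen.head hstep (ih σ' hσ'x hσ'y τ fun z => ?_)
      rw [hτ z]
      by_cases hzx : z = x
      · subst hzx; rw [if_pos rfl, if_pos rfl]
      · rw [if_neg hzx, if_neg hzx]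
        by_cases hzy : z = y
        · subst hzy
          rw [if_pos rfl, if_pos rfl, hσ', move_apply_y σ hx.ne' hxy,
            move_apply_x σ hx.ne' hxy]
          omega
        · rw [if_neg hzy, if_neg hzy, hσ', move_apply_other σ hx.ne' hzx hzy]

lemma inOmega_c_eq_zero {η : Config V k} (hΩ : inOmega c η) {p q : V}
    (hp : η.1 p ≠ 0) (hq : η.1 q ≠ 0) : c p q = 0 := by
  have h0 := hΩ p q
  have hp' : (η.1 p : ℝ) ≠ 0 := Nat.cast_ne_zero.mpr hp
  have hq' : (η.1 q : ℝ) ≠ 0 := Nat.cast_ne_zero.mpr hq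
  rcases mul_eq_zero.mp h0 with h | h
  · rcases mul_eq_zero.mp h with h | h
    · exact h
    · exact absurd h hp'
  · exact absurd h hq'

lemma inOmega_of_c {η : Config V k} (h : ∀ p q, η.1 p ≠ 0 → η.1 q ≠ 0 → c p q = 0) : inOmega c η := by
  intro p q
  by_cases hp : η.1 p = 0
  · rw [hp]; push_cast; ring
  by_cases hq : η.1 q = 0
  · rw [hq]; push_cast; ring
  rw [h p q hp hq]; ring

lemma not_inOmega_of {ρ : Config V k} {x y : V} (hc : 0 < c x y) (hx : 0 < ρ.1 x)
    (hy : 0 < ρ.1 y) : ¬ inOmega c ρ := by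
  intro h
  have := inOmega_c_eq_zero h hx.ne' hy.ne'
  exact absurd this hc.ne'

lemma omega_empty {η : Config V k} (hΩ : inOmega c η) {x y : V} (hc : 0 < c x y)
    (hx : η.1 x ≠ 0) : η.1 y = 0 := by
  by_contra hy
  exact absurd (inOmega_c_eq_zero hΩ hx hy) hc.ne'

lemma suppF_move_empty {η : Config V k} {x y : V} (hx : 0 < η.1 x) (hy : η.1 y = 0)
    (hxy : x ≠ y) :
    suppF (η.move x y)
      = insert y (if η.1 x = 1 then (suppF η).erase x else suppF η) := by
  ext z
  by_cases hzy : z = y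
  · subst hzy
    rw [mem_suppF, move_apply_y η hx.ne' hxy]
    simp
  · rw [Finset.mem_insert]
    by_cases hzx : z = x
    · subst hzx
      rw [mem_suppF, move_apply_x η hx.ne' hxy]
      split
      · rename_i h1
        simp [h1, hxy, Finset.mem_erase]
      · rename_i h1
        simp only [hxy, false_or, mem_suppF]
        omega
    · rw [mem_suppF, move_apply_other η hx.ne' hzx hzy]
      split
      · simp [Finset.mem_erase, mem_suppF, hzx, hzy]
      · simp [mem_suppF, hzy]

lemma rateM_eq_zero (hnonneg : ∀ x y, 0 ≤ c x y) (hloop : ∀ x, c x x = 0)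
    {β : V → ℝ} {m m' : ℕ} {η ξ : Config V k}
    (hη : inOmega c η) (hηm : numStacks η = m) (hξ : inOmega c ξ)
    (hξm : numStacks ξ = m') (hmm : m < m') :
    rateM c β (absorbH c) η ξ = 0 := by
  set S : Set (Config V k) :=
    {σ | numStacks σ < m' ∨ (numStacks σ = m' ∧ ¬ inOmega c σ)} with hS
  have hclosed : ∀ a ∈ S, ∀ b, clumpMatrix c k a b ≠ 0 → b ∈ S := by
    intro a ha b hab
    by_cases hba : b = a
    · subst hba; exact ha
    obtain ⟨x, y, hc, hax, hay, rfl⟩ := clump_step_exists c hnonneg hba hab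
    have hxy : x ≠ y := by
      rintro rfl; rw [hloop x] at hc; exact lt_irrefl 0 hc
    have hle := numStacks_move_le hax hay hxy
    rcases ha with h1 | ⟨h2, -⟩
    · exact Or.inl (lt_of_le_of_lt hle h1)
    · by_cases hone : a.1 x = 1
      · have := numStacks_move_lt hax hay hxy hone
        have hpos : 0 < numStacks a := by
          rw [numStacks_eq]
          exact Finset.card_pos.mpr ⟨x, mem_suppF.mpr hax⟩
        exact Or.inl (by omega)
      · rcases lt_or_eq_of_le hle with hlt | heq
        · exact Or.inl (by omega)
        · refine Or.inr ⟨by omega, ?_⟩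
          have hbx : 0 < (a.move x y).1 x := by
            rw [move_apply_x a hax.ne' hxy]; omega
          have hby : 0 < (a.move x y).1 y := by
            rw [move_apply_y a hax.ne' hxy]; omega
          exact not_inOmega_of hc hbx hby
  have hξS : ξ ∉ S := by
    rw [hS]
    rintro (h1 | ⟨-, h3⟩)
    · omega
    · exact h3 hξ
  refine Finset.sum_eq_zero fun ζ _ => ?_
  by_cases hA : rateA c β η ζ = 0
  · rw [hA, zero_mul]
  obtain ⟨x, y, hc, hx, rfl⟩ := rateA_ne_zero hnonneg hA
  have hxy : x ≠ y := by
    rintro rfl; rw [hloop x] at hc; exact lt_irrefl 0 hc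
  have hy0 : η.1 y = 0 := omega_empty hη hc hx
  have hζS : η.move x y ∈ S := by
    have hsupp := suppF_move_empty (Nat.pos_of_ne_zero hx) hy0 hxy
    have hymem : y ∉ suppF η := by rw [mem_suppF]; omega
    have hxmem : x ∈ suppF η := mem_suppF.mpr (Nat.pos_of_ne_zero hx)
    rw [hS]
    by_cases hone : η.1 x = 1
    · left
      rw [numStacks_eq, hsupp, if_pos hone]
      rw [Finset.card_insert_of_notMem (fun hmem => hymem (Finset.mem_of_mem_erase hmem)),
        Finset.card_erase_of_mem hxmem]
      have hpos : 0 < (suppF η).card := Finset.card_pos.mpr ⟨x, hxmem⟩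
      rw [numStacks_eq] at hηm
      omega
    · have hcard : numStacks (η.move x y) = m + 1 := by
        rw [numStacks_eq, hsupp, if_neg hone, Finset.card_insert_of_notMem hymem,
          ← numStacks_eq, hηm]
      rcases lt_or_eq_of_le (Nat.succ_le_of_lt hmm) with hlt | heq
      · exact Or.inl (by omega)
      · refine Or.inr ⟨by omega, ?_⟩
        have hbx : 0 < (η.move x y).1 x := by
          rw [move_apply_x η hx hxy]; omega
        have hby : 0 < (η.move x y).1 y := by
          rw [move_apply_y η hx hxy]; omega
        exact not_inOmega_of hc hbx hby
  rw [absorbH_eq_zero hnonneg hclosed hζS hξS, mul_zero]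

section Graph

lemma adj_of_pos (hloop : ∀ x, c x x = 0) {x y : V} (h : 0 < c x y) :
    (graphOf c).Adj x y := by
  refine ⟨fun he => ?_, Or.inl h⟩
  rw [he, hloop y] at h
  exact lt_irrefl 0 h

lemma pos_of_adj (hsymm : ∀ x y, c x y = c y x) {x y : V} (h : (graphOf c).Adj x y) :
    0 < c x y := by
  rcases h.2 with h' | h'
  · exact h'
  · rw [hsymm x y]; exact h'

lemma ne_of_cpos (hloop : ∀ x, c x x = 0) {x y : V} (h : 0 < c x y) : x ≠ y := by
  rintro rfl; rw [hloop x] at h; exact lt_irrefl 0 h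

end Graph

section Steps
variable {β : V → ℝ}

lemma drop_step (hnonneg : ∀ x y, 0 ≤ c x y) (hloop : ∀ x, c x x = 0)
    (hβ : ∀ x, 0 < β x) {η : Config V k} (hΩ : inOmega c η)
    {a b y : V} (hab : a ≠ b) (ha : 0 < η.1 a) (hb : 0 < η.1 b)
    (hay : 0 < c a y) (hyb : 0 < c y b) :
    ∃ τ : Config V k, inOmega c τ ∧ numStacks τ = numStacks η - 1 ∧
      0 < rateM c β (absorbH c) η τ := by
  have hya : a ≠ y := ne_of_cpos hloop hay
  have hyb' : y ≠ b := ne_of_cpos hloop hyb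
  have hηy : η.1 y = 0 := omega_empty hΩ hay ha.ne'
  set ζ := η.move a y with hζ
  have hζa : ζ.1 a = η.1 a - 1 := move_apply_x η ha.ne' hya
  have hζy : ζ.1 y = 1 := by rw [hζ, move_apply_y η ha.ne' hya, hηy]
  have hζother : ∀ z, z ≠ a → z ≠ y → ζ.1 z = η.1 z := fun z h1 h2 =>
    move_apply_other η ha.ne' h1 h2
  set σ := mergeCfg ζ a y hya with hσ
  have hσspec := mergeCfg_spec ζ a y hya
  have reach1 : Relation.ReflTransGen (stepRel c) ζ σ :=
    reach_dump hya hay (ζ.1 a) ζ rfl (by omega) σ hσspec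
  have hσa : σ.1 a = 0 := by rw [hσspec a, if_pos rfl]
  have hσy : σ.1 y = η.1 a := by
    rw [hσspec y, if_neg (Ne.symm hya), if_pos rfl, hζy, hζa]; omega
  have hσother : ∀ z, z ≠ a → z ≠ y → σ.1 z = η.1 z := by
    intro z h1 h2
    rw [hσspec z, if_neg h1, if_neg h2, hζother z h1 h2]
  have hσb : σ.1 b = η.1 b := hσother b (Ne.symm hab) (Ne.symm hyb')
  set τ := mergeCfg σ y b hyb' with hτ
  have hτspec := mergeCfg_spec σ y b hyb'
  have reach2 : Relation.ReflTransGen (stepRel c) σ τ :=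
    reach_dump hyb' hyb (σ.1 y) σ rfl (by omega) τ hτspec
  have hτy : τ.1 y = 0 := by rw [hτspec y, if_pos rfl]
  have hτb : τ.1 b = η.1 b + η.1 a := by
    rw [hτspec b, if_neg (Ne.symm hyb'), if_pos rfl, hσb, hσy]
  have hτa : τ.1 a = 0 := by rw [hτspec a, if_neg hya, if_neg hab, hσa]
  have hτother : ∀ z, z ≠ a → z ≠ y → z ≠ b → τ.1 z = η.1 z := by
    intro z h1 h2 h3
    rw [hτspec z, if_neg h2, if_neg h3, hσother z h1 h2]
  refine ⟨τ, ?_, ?_, ?_⟩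
  · refine inOmega_of_subset (η := η) ?_ hΩ
    intro z hz
    by_cases h1 : z = a
    · subst h1; rw [hτa] at hz; omega
    by_cases h2 : z = y
    · subst h2; rw [hτy] at hz; omega
    by_cases h3 : z = b
    · subst h3; exact hb
    · rw [hτother z h1 h2 h3] at hz; exact hz
  · have hsupp : suppF τ = (suppF η).erase a := by
      ext z
      rw [mem_suppF, Finset.mem_erase, mem_suppF]
      by_cases h1 : z = a
      · subst h1; simp [hτa]
      by_cases h2 : z = y
      · subst h2; rw [hτy, hηy]; simp
      by_cases h3 : z = b
      · subst h3
        rw [hτb]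
        exact ⟨fun _ => ⟨Ne.symm hab, hb⟩, fun _ => by omega⟩
      · rw [hτother z h1 h2 h3]; simp [h1]
    rw [numStacks_eq, numStacks_eq, hsupp, Finset.card_erase_of_mem (mem_suppF.mpr ha)]
  · exact rateM_pos hnonneg hβ hay ha.ne' (reach1.trans reach2)

lemma relocate_step (hsymm : ∀ x y, c x y = c y x) (hnonneg : ∀ x y, 0 ≤ c x y)
    (hloop : ∀ x, c x x = 0) (hβ : ∀ x, 0 < β x) {η : Config V k} (hΩ : inOmega c η)
    {x v : V} (hx : 0 < η.1 x) (hxv : 0 < c x v)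
    (hfar : ∀ w, 0 < η.1 w → w ≠ x → c v w = 0) :
    ∃ η' : Config V k, inOmega c η' ∧ numStacks η' = numStacks η ∧
      η'.1 v = η.1 x ∧ (∀ z, z ≠ x → z ≠ v → η'.1 z = η.1 z) ∧
      0 < rateM c β (absorbH c) η η' := by
  have hxv' : x ≠ v := ne_of_cpos hloop hxv
  have hηv : η.1 v = 0 := omega_empty hΩ hxv hx.ne'
  set ζ := η.move x v with hζ
  have hζx : ζ.1 x = η.1 x - 1 := move_apply_x η hx.ne' hxv'
  have hζv : ζ.1 v = 1 := by rw [hζ, move_apply_y η hx.ne' hxv', hηv]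
  have hζother : ∀ z, z ≠ x → z ≠ v → ζ.1 z = η.1 z := fun z h1 h2 =>
    move_apply_other η hx.ne' h1 h2
  set η' := mergeCfg ζ x v hxv' with hη'
  have hspec := mergeCfg_spec ζ x v hxv'
  have reach : Relation.ReflTransGen (stepRel c) ζ η' :=
    reach_dump hxv' hxv (ζ.1 x) ζ rfl (by omega) η' hspec
  have hη'x : η'.1 x = 0 := by rw [hspec x, if_pos rfl]
  have hη'v : η'.1 v = η.1 x := by
    rw [hspec v, if_neg (Ne.symm hxv'), if_pos rfl, hζv, hζx]; omega
  have hη'other : ∀ z, z ≠ x → z ≠ v → η'.1 z = η.1 z := by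
    intro z h1 h2
    rw [hspec z, if_neg h1, if_neg h2, hζother z h1 h2]
  refine ⟨η', ?_, ?_, hη'v, hη'other, ?_⟩
  · refine inOmega_of_c fun p q hp hq => ?_
    have hpx : p ≠ x := by rintro rfl; rw [hη'x] at hp; exact hp rfl
    have hqx : q ≠ x := by rintro rfl; rw [hη'x] at hq; exact hq rfl
    by_cases hpv : p = v
    · by_cases hqv : q = v
      · rw [hpv, hqv]; exact hloop v
      · have hq' : η.1 q ≠ 0 := by rw [← hη'other q hqx hqv]; exact hq
        rw [hpv]
        exact hfar q (Nat.pos_of_ne_zero hq') hqx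
    · by_cases hqv : q = v
      · have hp' : η.1 p ≠ 0 := by rw [← hη'other p hpx hpv]; exact hp
        rw [hqv, hsymm p v]
        exact hfar p (Nat.pos_of_ne_zero hp') hpx
      · have hp' : η.1 p ≠ 0 := by rw [← hη'other p hpx hpv]; exact hp
        have hq' : η.1 q ≠ 0 := by rw [← hη'other q hqx hqv]; exact hq
        exact inOmega_c_eq_zero hΩ hp' hq'
  · have hsupp : suppF η' = insert v ((suppF η).erase x) := by
      ext z
      rw [mem_suppF, Finset.mem_insert, Finset.mem_erase, mem_suppF]
      by_cases h2 : z = v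
      · subst h2; rw [hη'v]; simp [hx]
      by_cases h1 : z = x
      · subst h1; rw [hη'x]; simp [hxv']
      · rw [hη'other z h1 h2]; simp [h1, h2]
    have hvmem : v ∉ (suppF η).erase x := by
      intro hmem
      have := mem_suppF.mp (Finset.mem_of_mem_erase hmem)
      omega
    have hxmem : x ∈ suppF η := mem_suppF.mpr hx
    have hpos : 0 < (suppF η).card := Finset.card_pos.mpr ⟨x, hxmem⟩
    rw [numStacks_eq, numStacks_eq, hsupp, Finset.card_insert_of_notMem hvmem,
      Finset.card_erase_of_mem hxmem]
    omega
  · exact rateM_pos hnonneg hβ hxv hx.ne' reach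

end Steps

section Path
variable (c) (β : V → ℝ)

/-- The target statement of part (iii). -/
def Concl (m : ℕ) (η : Config V k) : Prop :=
  ∃ (l : ℕ) (p : ℕ → Config V k) (m' : ℕ) (ξ : Config V k),
    m' < m ∧ p 0 = η ∧ p (l + 1) = ξ ∧
    (∀ i, 1 ≤ i → i ≤ l → inOmega c (p i) ∧ numStacks (p i) = m) ∧
    inOmega c ξ ∧ numStacks ξ = m' ∧
    0 < ∏ i ∈ Finset.range (l + 1), rateM c β (absorbH c) (p i) (p (i + 1))

variable {c} {β}

lemma Concl_base {m : ℕ} (hm : 1 ≤ m) {η ξ : Config V k} (hξΩ : inOmega c ξ)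
    (hξm : numStacks ξ = m - 1) (hrate : 0 < rateM c β (absorbH c) η ξ) :
    Concl c β m η := by
  refine ⟨0, fun i => if i = 0 then η else ξ, m - 1, ξ, by omega, if_pos rfl,
    if_neg one_ne_zero, fun i h1 h2 => absurd (le_trans h1 h2) (by omega), hξΩ, hξm, ?_⟩
  rw [Finset.prod_range_one]
  simpa using hrate

lemma Concl_prepend {m : ℕ} {η η' : Config V k} (hη'Ω : inOmega c η')
    (hη'm : numStacks η' = m) (hrate : 0 < rateM c β (absorbH c) η η')
    (hC : Concl c β m η') : Concl c β m η := by
  obtain ⟨l, p, m', ξ, hm', hp0, hpl, hint, hξΩ, hξm, hprod⟩ := hC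
  set q : ℕ → Config V k := fun i => if i = 0 then η else p (i - 1) with hqdef
  have hq0 : q 0 = η := by simp [hqdef]
  have hqs : ∀ i, q (i + 1) = p i := fun i => by simp [hqdef]
  refine ⟨l + 1, q, m', ξ, hm', hq0, (hqs (l + 1)).trans hpl, ?_, hξΩ, hξm, ?_⟩
  · intro i h1 h2
    cases i with
    | zero => omega
    | succ j =>
        rw [hqs j]
        cases j with
        | zero => rw [hp0]; exact ⟨hη'Ω, hη'm⟩
        | succ jj => exact hint (jj + 1) (by omega) (by omega)
  · rw [Finset.prod_range_succ']
    have hc1 : ∀ i ∈ Finset.range (l + 1),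
        rateM c β (absorbH c) (q (i + 1)) (q (i + 1 + 1))
        = rateM c β (absorbH c) (p i) (p (i + 1)) := by
      intro i _
      rw [hqs i, hqs (i + 1)]
    rw [Finset.prod_congr rfl hc1]
    have h0 : rateM c β (absorbH c) (q 0) (q (0 + 1)) = rateM c β (absorbH c) η η' := by
      rw [hq0, (hqs 0).trans hp0]
    rw [h0]
    exact mul_pos hprod hrate

lemma part3core (hsymm : ∀ x y, c x y = c y x) (hnonneg : ∀ x y, 0 ≤ c x y)
    (hloop : ∀ x, c x x = 0) (hconn : (graphOf c).Connected) (hβ : ∀ x, 0 < β x)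
    (m : ℕ) :
    ∀ d : ℕ, ∀ η : Config V k, inOmega c η → numStacks η = m →
      (∃ x z : V, x ≠ z ∧ 0 < η.1 x ∧ 0 < η.1 z ∧ (graphOf c).dist x z ≤ d) →
      Concl c β m η := by
  intro d
  induction d with
  | zero =>
      rintro η hΩ hm ⟨x, z, hxz, hx, hz, hd⟩
      have := hconn.pos_dist_of_ne hxz
      omega
  | succ d ih =>
      rintro η hΩ hm ⟨x, z, hxz, hx, hz, hd⟩
      by_cases hcase : ∃ a b y, a ≠ b ∧ 0 < η.1 a ∧ 0 < η.1 b ∧ 0 < c a y ∧ 0 < c y b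
      · obtain ⟨a, b, y, hab, ha, hb, hay, hyb⟩ := hcase
        obtain ⟨τ, hτΩ, hτm, hrate⟩ := drop_step hnonneg hloop hβ hΩ hab ha hb hay hyb
        have hm1 : 1 ≤ m := by
          rw [← hm, numStacks_eq]
          exact Finset.card_pos.mpr ⟨a, mem_suppF.mpr ha⟩
        exact Concl_base hm1 hτΩ (by rw [hτm, hm]) hrate
      · have hd1 : (graphOf c).dist x z ≠ 0 := (hconn.pos_dist_of_ne hxz).ne'
        have hd2 : (graphOf c).dist x z ≠ 1 := by
          intro h1
          have hadj := SimpleGraph.dist_eq_one_iff_adj.mp h1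
          have hc := pos_of_adj hsymm hadj
          exact absurd (inOmega_c_eq_zero hΩ hx.ne' hz.ne') hc.ne'
        have hd3 : (graphOf c).dist x z ≠ 2 := by
          intro h2
          obtain ⟨w, hw⟩ := hconn.exists_walk_length_eq_dist x z
          rw [h2] at hw
          cases w with
          | nil => simp at hw
          | cons hadj p =>
              rename_i y1
              cases p with
              | nil => simp at hw
              | cons hadj' p' =>
                  rename_i y2
                  rw [SimpleGraph.Walk.length_cons, SimpleGraph.Walk.length_cons] at hw
                  have hlen : p'.length = 0 := by omega
                  have heq := SimpleGraph.Walk.eq_of_length_eq_zero hlen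
                  rw [heq] at hadj'
                  exact hcase ⟨x, z, y1, hxz, hx, hz, pos_of_adj hsymm hadj,
                    pos_of_adj hsymm hadj'⟩
        have hd4 : 3 ≤ (graphOf c).dist x z := by omega
        obtain ⟨w, hw⟩ := hconn.exists_walk_length_eq_dist x z
        cases w with
        | nil => simp at hd4
        | cons hadj p =>
            rename_i v1
            rw [SimpleGraph.Walk.length_cons] at hw
            have hdv : (graphOf c).dist v1 z ≤ (graphOf c).dist x z - 1 := by
              have := SimpleGraph.dist_le p
              omega
            have hxv1 : 0 < c x v1 := pos_of_adj hsymm hadj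
            have hfar : ∀ u, 0 < η.1 u → u ≠ x → c v1 u = 0 := by
              intro u hu hux
              by_contra hne
              have hpos : 0 < c v1 u := lt_of_le_of_ne (hnonneg v1 u) (Ne.symm hne)
              exact hcase ⟨x, u, v1, Ne.symm hux, hx, hu, hxv1, hpos⟩
            obtain ⟨η', hη'Ω, hη'm, hη'v, hη'o, hrate⟩ :=
              relocate_step hsymm hnonneg hloop hβ hΩ hx hxv1 hfar
            have hv1z : v1 ≠ z := by
              rintro rfl
              have : (graphOf c).dist x v1 = 1 := SimpleGraph.dist_eq_one_iff_adj.mpr hadj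
              omega
            have hzx : z ≠ x := Ne.symm hxz
            have hnewpair : ∃ a b : V, a ≠ b ∧ 0 < η'.1 a ∧ 0 < η'.1 b ∧
                (graphOf c).dist a b ≤ d := by
              refine ⟨v1, z, hv1z, ?_, ?_, by omega⟩
              · rw [hη'v]; exact hx
              · rw [hη'o z hzx (Ne.symm hv1z)]; exact hz
            exact Concl_prepend hη'Ω (by rw [hη'm, hm]) hrate
              (ih η' hη'Ω (by rw [hη'm, hm]) hnewpair)

end Path

end MetaAux
end

theorem metastable_rates_structure
    {V : Type*} [Fintype V] [DecidableEq V] (c : V → V → ℝ) (β : V → ℝ)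
    (hsymm : ∀ x y, c x y = c y x) (hnonneg : ∀ x y, 0 ≤ c x y)
    (hloop : ∀ x, c x x = 0) (hconn : (graphOf c).Connected)
    (hβ : ∀ x, 0 < β x) (k : ℕ) (hk : 2 ≤ k) :
    ∃ h : Config V k → Config V k → ℝ,
      (∀ ξ : Config V k, inOmega c ξ → ∀ ζ : Config V k,
        Filter.Tendsto
          (fun t : ℝ => (NormedSpace.exp (t • clumpMatrix c k)).mulVec
            (fun ρ => if ρ = ξ then 1 else 0) ζ)
          Filter.atTop (nhds (h ξ ζ))) ∧
      (∀ m m' : ℕ, 1 ≤ m → 1 ≤ m' →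
        (∃ η₀ : Config V k, inOmega c η₀ ∧ numStacks η₀ = m) →
        (∃ η₀ : Config V k, inOmega c η₀ ∧ numStacks η₀ = m') →
        m < m' →
        ∀ η ξ : Config V k, inOmega c η → numStacks η = m →
          inOmega c ξ → numStacks ξ = m' → rateM c β h η ξ = 0) ∧
      (∀ m : ℕ, 2 ≤ m → ∀ η : Config V k, inOmega c η → numStacks η = m →
        ∃ (l : ℕ) (p : ℕ → Config V k) (m' : ℕ) (ξ : Config V k),
          m' < m ∧ p 0 = η ∧ p (l + 1) = ξ ∧
          (∀ i, 1 ≤ i → i ≤ l → inOmega c (p i) ∧ numStacks (p i) = m) ∧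
          inOmega c ξ ∧ numStacks ξ = m' ∧
          0 < ∏ i ∈ Finset.range (l + 1), rateM c β h (p i) (p (i + 1))) := by
  classical
  refine ⟨MetaAux.absorbH c, ?_, ?_, ?_⟩
  · intro ξ hΩ ζ
    have h1 := MetaAux.absorbH_tendsto hnonneg hΩ ζ
    refine h1.congr fun t => ?_
    simp [Matrix.mulVec, dotProduct, mul_ite]
  · intro m m' hm hm' hOm hOm' hlt η ξ hη hηm hξ hξm
    exact MetaAux.rateM_eq_zero hnonneg hloop hη hηm hξ hξm hlt
  · intro m hm η hΩ hηm
    have h2 : 1 < numStacks η := by omega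
    rw [MetaAux.numStacks_eq] at h2
    obtain ⟨a, ha, b, hb, hab⟩ := Finset.one_lt_card.mp h2
    exact MetaAux.part3core hsymm hnonneg hloop hconn hβ m ((graphOf c).dist a b) η hΩ hηm
      ⟨a, b, hab, MetaAux.mem_suppF.mp ha, MetaAux.mem_suppF.mp hb, le_rfl⟩
end

section
/- Fix a finite connected weighted graph G, positive site weights α̂, and k ≥ 2. With h_ξ(ζ) := lim_{t→∞} (e^{t B_k} 1_ξ)(ζ) and r^M(η,ξ) := Σ_{ζ∈Ξ_k} r^A(η,ζ) h_ξ(ζ) for ξ ≠ η, the restriction of the metastable chain to single-stack configurations evolves as the random walk RW(G,α̂): for all distinct x, y ∈ V, r^M(k·δ_x, k·δ_y) = c_{xy} · α̂_y. -/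
open scoped BigOperators Classical

/-!
From `k δ_x` the independent walks move a particle to `b` at rate `k c_{xb} β_b`, landing on
`(k-1) δ_x + δ_b`. The limit `h_ξ = lim e^{tB} 1_ξ` is `B`-harmonic, and it equals `1_ξ` on single
stacks, which are absorbing for `B`. On the configurations `(k-m) δ_x + m δ_b` the fast dynamics is
a birth–death chain in `m` with equal rates `c_{xb} m (k-m)` up and down, so a harmonic function is
affine in `m` there. Hence `h_ξ((k-1) δ_x + δ_b) = 1_{b = y} / k`, which cancels the factor `k`.
-/

open Filter Topology

theorem eq_add_mul_sub_of_sub_eq_sub (u : ℕ → ℝ) {n : ℕ}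
    (h : ∀ m, m + 2 ≤ n → u (m + 2) - u (m + 1) = u (m + 1) - u m) :
    u n = u 0 + n * (u 1 - u 0) := by
  have hconst : ∀ m, m + 1 ≤ n → u (m + 1) - u m = u 1 - u 0 := by
    intro m
    induction m with
    | zero => simp
    | succ m ih => intro hm; rw [h m hm, ih (by omega)]
  have htel := Finset.sum_range_sub u n
  rw [Finset.sum_congr rfl fun i hi => hconst i (Finset.mem_range.1 hi)] at htel
  simp only [Finset.sum_const, Finset.card_range, nsmul_eq_mul] at htel
  linarith

namespace Matrix

variable {ι : Type*} [Fintype ι] [DecidableEq ι]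

open scoped Matrix.Norms.Operator in
theorem hasDerivAt_exp_smul_mulVec (A : Matrix ι ι ℝ) (v : ι → ℝ) (t : ℝ) :
    HasDerivAt (fun s : ℝ => NormedSpace.exp (s • A) *ᵥ v)
      (A *ᵥ (NormedSpace.exp (t • A) *ᵥ v)) t := by
  let L : Matrix ι ι ℝ →L[ℝ] ι → ℝ :=
    LinearMap.toContinuousLinearMap (LinearMap.applyₗ v ∘ₗ Matrix.toLin'.toLinearMap)
  rw [mulVec_mulVec]
  exact L.hasFDerivAt.comp_hasDerivAt t (hasDerivAt_exp_smul_const' (𝕂 := ℝ) A t)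

theorem exp_smul_mulVec_apply_of_row_eq_zero {A : Matrix ι ι ℝ} {i : ι} (hA : ∀ j, A i j = 0)
    (v : ι → ℝ) (t : ℝ) : (NormedSpace.exp (t • A) *ᵥ v) i = v i := by
  have hderiv : ∀ s, HasDerivAt (fun s : ℝ => (NormedSpace.exp (s • A) *ᵥ v) i) 0 s := fun s => by
    simpa [mulVec, dotProduct, hA] using hasDerivAt_pi.1 (hasDerivAt_exp_smul_mulVec A v s) i
  simpa using is_const_of_deriv_eq_zero (fun s => (hderiv s).differentiableAt)
    (fun s => (hderiv s).deriv) t 0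

theorem exp_add_smul_mulVec (A : Matrix ι ι ℝ) (s t : ℝ) (v : ι → ℝ) :
    NormedSpace.exp ((s + t) • A) *ᵥ v
      = NormedSpace.exp (s • A) *ᵥ (NormedSpace.exp (t • A) *ᵥ v) := by
  rw [mulVec_mulVec, add_smul,
    exp_add_of_commute _ _ (((Commute.refl A).smul_left s).smul_right t)]

theorem mulVec_eq_zero_of_tendsto_exp_smul_mulVec {A : Matrix ι ι ℝ} {v w : ι → ℝ}
    (h : Tendsto (fun t : ℝ => NormedSpace.exp (t • A) *ᵥ v) atTop (𝓝 w)) : A *ᵥ w = 0 := by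
  have hinv : ∀ s : ℝ, NormedSpace.exp (s • A) *ᵥ w = w := fun s => by
    have hshift : Tendsto (fun t : ℝ => NormedSpace.exp (s • A) *ᵥ (NormedSpace.exp (t • A) *ᵥ v))
        atTop (𝓝 w) := by
      simpa only [Function.comp_def, id, exp_add_smul_mulVec] using
        h.comp (tendsto_atTop_add_const_left _ s tendsto_id)
    refine tendsto_nhds_unique ?_ hshift
    exact ((Continuous.matrix_mulVec continuous_const continuous_id).tendsto w).comp h
  have hderiv := hasDerivAt_exp_smul_mulVec A w 0
  simp only [hinv] at hderiv
  exact hderiv.unique (hasDerivAt_const 0 w)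

end Matrix

open scoped Matrix

@[ext]
theorem Config.ext {V : Type*} [Fintype V] {k : ℕ} {η ζ : Config V k}
    (h : ∀ z, η.1 z = ζ.1 z) : η = ζ :=
  Subtype.ext (funext h)

section Configurations

variable {V : Type*} [Fintype V] [DecidableEq V] {k : ℕ}

theorem Config.move_apply_s10 (η : Config V k) {x : V} (hx : η.1 x ≠ 0) (y z : V) :
    (η.move x y).1 z = η.1 z - (if z = x then 1 else 0) + (if z = y then 1 else 0) := by
  simp [Config.move, hx]

theorem clumpMatrix_mulVec_apply (c : V → V → ℝ) (v : Config V k → ℝ) (η : Config V k) :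
    (clumpMatrix c k *ᵥ v) η = ∑ a, ∑ b, c a b * η.1 a * η.1 b * (v (η.move a b) - v η) := by
  simp only [clumpMatrix, Matrix.mulVec, dotProduct, Finset.sum_mul]
  rw [Finset.sum_comm]
  refine Finset.sum_congr rfl fun a _ => ?_
  rw [Finset.sum_comm]
  refine Finset.sum_congr rfl fun b _ => ?_
  simp [mul_sub, sub_mul, Finset.sum_sub_distrib]

theorem clumpMatrix_apply_of_inOmega {c : V → V → ℝ} {η : Config V k} (hη : inOmega c η)
    (ζ : Config V k) : clumpMatrix c k η ζ = 0 := by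
  simp only [clumpMatrix]
  exact Finset.sum_eq_zero fun a _ => Finset.sum_eq_zero fun b _ => by rw [hη a b, zero_mul]

theorem inOmega_stackConfig {c : V → V → ℝ} (hloop : ∀ x, c x x = 0) (y : V) :
    inOmega c (stackConfig V k y) := by
  intro a b
  by_cases ha : a = y <;> by_cases hb : b = y <;> simp [stackConfig, ha, hb, hloop]

theorem stackConfig_injective (hk : k ≠ 0) : Function.Injective (stackConfig V k) := by
  intro x y hxy
  have := congrArg (fun η : Config V k => η.1 x) hxy
  by_contra hne
  simp [stackConfig, hne, hk] at this

theorem clumpMatrix_mulVec_apply_of_support_pair {c : V → V → ℝ} (hloop : ∀ x, c x x = 0)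
    {x b : V} (hxb : x ≠ b) {η : Config V k} (hη : ∀ z, z ≠ x → z ≠ b → η.1 z = 0)
    (v : Config V k → ℝ) :
    (clumpMatrix c k *ᵥ v) η = c x b * η.1 x * η.1 b * (v (η.move x b) - v η)
      + c b x * η.1 b * η.1 x * (v (η.move b x) - v η) := by
  have hpair : ∀ f : V → ℝ, (∀ z, η.1 z = 0 → f z = 0) → ∑ z, f z = f x + f b := fun f hf => by
    rw [← Finset.sum_pair hxb]
    refine (Finset.sum_subset (Finset.subset_univ _) fun z _ hz => hf z ?_).symm
    simp only [Finset.mem_insert, Finset.mem_singleton, not_or] at hz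
    exact hη z hz.1 hz.2
  rw [clumpMatrix_mulVec_apply, hpair, hpair, hpair] <;> simp_all

def twoSiteConfig (x b : V) (k m : ℕ) : Config V k :=
  ⟨fun z => (if z = b then min m k else 0) + (if z = x then k - min m k else 0), by
    rw [Finset.sum_add_distrib, Finset.sum_ite_eq', Finset.sum_ite_eq']
    simp⟩

theorem twoSiteConfig_zero (x b : V) : twoSiteConfig x b k 0 = stackConfig V k x := by
  ext z
  by_cases hz : z = x <;> simp [twoSiteConfig, stackConfig, hz]

theorem twoSiteConfig_self (x b : V) : twoSiteConfig x b k k = stackConfig V k b := by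
  ext z
  by_cases hz : z = b <;> simp [twoSiteConfig, stackConfig, hz]

theorem twoSiteConfig_move_forward {x b : V} (hxb : x ≠ b) {m : ℕ} (hm : m < k) :
    (twoSiteConfig x b k m).move x b = twoSiteConfig x b k (m + 1) := by
  have hx : (twoSiteConfig x b k m).1 x ≠ 0 := by
    simp [twoSiteConfig, hxb]
    omega
  ext z
  rw [Config.move_apply_s10 _ hx]
  by_cases hzx : z = x <;> by_cases hzb : z = b <;>
    simp [twoSiteConfig, hzx, hzb, hxb, hxb.symm, hm.le, Nat.succ_le_of_lt hm] <;> omega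

theorem twoSiteConfig_move_backward {x b : V} (hxb : x ≠ b) {m : ℕ} (hm : m < k) :
    (twoSiteConfig x b k (m + 1)).move b x = twoSiteConfig x b k m := by
  have hb : (twoSiteConfig x b k (m + 1)).1 b ≠ 0 := by
    simp [twoSiteConfig, hxb.symm]
    omega
  ext z
  rw [Config.move_apply_s10 _ hb]
  by_cases hzx : z = x <;> by_cases hzb : z = b <;>
    simp [twoSiteConfig, hzx, hzb, hxb, hxb.symm, hm.le, Nat.succ_le_of_lt hm] <;> omega

theorem twoSiteConfig_apply_of_ne {x b z : V} (hzx : z ≠ x) (hzb : z ≠ b) (m : ℕ) :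
    (twoSiteConfig x b k m).1 z = 0 := by
  simp [twoSiteConfig, hzx, hzb]

theorem twoSiteConfig_second_difference {c : V → V → ℝ} (hsymm : ∀ x y, c x y = c y x)
    (hloop : ∀ x, c x x = 0) {x b : V} (hxb : x ≠ b) (hc : c x b ≠ 0) {v : Config V k → ℝ}
    (hv : clumpMatrix c k *ᵥ v = 0) {m : ℕ} (hm : m + 2 ≤ k) :
    v (twoSiteConfig x b k (m + 2)) - v (twoSiteConfig x b k (m + 1))
      = v (twoSiteConfig x b k (m + 1)) - v (twoSiteConfig x b k m) := by
  set η := twoSiteConfig x b k (m + 1)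
  have hx : η.1 x ≠ 0 := by
    simp [η, twoSiteConfig, hxb]
    omega
  have hb : η.1 b ≠ 0 := by
    simp [η, twoSiteConfig, hxb.symm]
    omega
  have hη : (clumpMatrix c k *ᵥ v) η = 0 := congrFun hv η
  rw [clumpMatrix_mulVec_apply_of_support_pair hloop hxb
      (fun z hzx hzb => twoSiteConfig_apply_of_ne hzx hzb _),
    (twoSiteConfig_move_forward hxb (by omega) : η.move x b = twoSiteConfig x b k (m + 2)),
    twoSiteConfig_move_backward hxb (by omega),
    hsymm b x] at hη
  have hprod : c x b * η.1 x * η.1 b * ((v (twoSiteConfig x b k (m + 2)) - v η)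
      - (v η - v (twoSiteConfig x b k m))) = 0 := by
    linear_combination hη
  rcases mul_eq_zero.1 hprod with h0 | h0
  · simp_all
  · linarith

theorem stackConfig_move_eq_twoSiteConfig_one {x b : V} (hxb : x ≠ b) (hk : k ≠ 0) :
    (stackConfig V k x).move x b = twoSiteConfig x b k 1 := by
  rw [← twoSiteConfig_zero x b, twoSiteConfig_move_forward hxb (Nat.pos_of_ne_zero hk)]

theorem harmonic_stackConfig_move {c : V → V → ℝ} (hsymm : ∀ x y, c x y = c y x)
    (hloop : ∀ x, c x x = 0) {x b : V} (hxb : x ≠ b) (hc : c x b ≠ 0) (hk : k ≠ 0)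
    {v : Config V k → ℝ} (hv : clumpMatrix c k *ᵥ v = 0) :
    v ((stackConfig V k x).move x b)
      = v (stackConfig V k x) + (v (stackConfig V k b) - v (stackConfig V k x)) / k := by
  have hlin := eq_add_mul_sub_of_sub_eq_sub (fun m => v (twoSiteConfig x b k m))
    (fun m hm => twoSiteConfig_second_difference hsymm hloop hxb hc hv hm) (n := k)
  simp only [twoSiteConfig_zero, twoSiteConfig_self] at hlin
  rw [stackConfig_move_eq_twoSiteConfig_one hxb hk]
  field_simp
  linarith

end Configurations

section MetastableRates

variable {V : Type*} [Fintype V] [DecidableEq V] {k : ℕ}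

theorem rateM_eq_sum (c : V → V → ℝ) (β : V → ℝ) (h : Config V k → Config V k → ℝ)
    (η ξ : Config V k) :
    rateM c β h η ξ = ∑ a, ∑ b, c a b * η.1 a * β b * h ξ (η.move a b) := by
  simp only [rateM, rateA, Finset.sum_mul]
  rw [Finset.sum_comm]
  refine Finset.sum_congr rfl fun a _ => ?_
  rw [Finset.sum_comm]
  refine Finset.sum_congr rfl fun b _ => ?_
  by_cases ha : η.1 a = 0 <;> simp [ha]

theorem rateM_stackConfig (c : V → V → ℝ) (β : V → ℝ) (h : Config V k → Config V k → ℝ)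
    (x : V) (ξ : Config V k) :
    rateM c β h (stackConfig V k x) ξ
      = ∑ b, c x b * k * β b * h ξ ((stackConfig V k x).move x b) := by
  rw [rateM_eq_sum, Finset.sum_eq_single x (fun a _ hax => by simp [stackConfig, hax]) (by simp)]
  simp [stackConfig]

end MetastableRates

theorem metastable_single_stack_is_random_walk_general
    {V : Type*} [Fintype V] [DecidableEq V] (c : V → V → ℝ) (β : V → ℝ)
    (hsymm : ∀ x y, c x y = c y x)
    (hloop : ∀ x, c x x = 0)
    (k : ℕ) (hk : 2 ≤ k)
    (h : Config V k → Config V k → ℝ)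
    (hlim : ∀ ξ : Config V k, inOmega c ξ → ∀ ζ : Config V k,
      Filter.Tendsto
        (fun t : ℝ => (NormedSpace.exp (t • clumpMatrix c k)).mulVec
          (fun ρ => if ρ = ξ then 1 else 0) ζ)
        Filter.atTop (nhds (h ξ ζ))) :
    ∀ x y : V, x ≠ y →
      rateM c β h (stackConfig V k x) (stackConfig V k y) = c x y * β y := by
  intro x y hxy
  have hk0 : k ≠ 0 := by omega
  have hlimξ := hlim _ (inOmega_stackConfig hloop y)
  have hharm : clumpMatrix c k *ᵥ h (stackConfig V k y) = 0 :=
    Matrix.mulVec_eq_zero_of_tendsto_exp_smul_mulVec (tendsto_pi_nhds.2 hlimξ)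
  have hstack : ∀ a, h (stackConfig V k y) (stackConfig V k a) = if a = y then 1 else 0 :=
    fun a => tendsto_nhds_unique (hlimξ _) <| by
      simp only [Matrix.exp_smul_mulVec_apply_of_row_eq_zero
        (clumpMatrix_apply_of_inOmega (inOmega_stackConfig hloop a)),
        (stackConfig_injective hk0).eq_iff]
      exact tendsto_const_nhds
  calc rateM c β h (stackConfig V k x) (stackConfig V k y)
      = ∑ b, if b = y then c x b * β b else 0 := by
        rw [rateM_stackConfig]
        refine Finset.sum_congr rfl fun b _ => ?_
        by_cases hbx : b = x
        · simp [hbx, hloop, hxy]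
        by_cases hc : c x b = 0
        · simp [hc]
        rw [harmonic_stackConfig_move hsymm hloop (Ne.symm hbx) hc hk0 hharm, hstack, hstack,
          if_neg hxy]
        split_ifs <;> field_simp <;> ring
    _ = c x y * β y := by simp

theorem metastable_single_stack_is_random_walk
    {V : Type*} [Fintype V] [DecidableEq V] (c : V → V → ℝ) (β : V → ℝ)
    (hsymm : ∀ x y, c x y = c y x) (hnonneg : ∀ x y, 0 ≤ c x y)
    (hloop : ∀ x, c x x = 0) (hconn : (graphOf c).Connected)
    (hβ : ∀ x, 0 < β x) (k : ℕ) (hk : 2 ≤ k)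
    (h : Config V k → Config V k → ℝ)
    (hlim : ∀ ξ : Config V k, inOmega c ξ → ∀ ζ : Config V k,
      Filter.Tendsto
        (fun t : ℝ => (NormedSpace.exp (t • clumpMatrix c k)).mulVec
          (fun ρ => if ρ = ξ then 1 else 0) ζ)
        Filter.atTop (nhds (h ξ ζ))) :
    ∀ x y : V, x ≠ y →
      rateM c β h (stackConfig V k x) (stackConfig V k y) = c x y * β y :=
  metastable_single_stack_is_random_walk_general c β hsymm hloop k hk h hlim
end
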